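/- arXiv:1808.04723 — 6 statements merged into one kernel-verified Lean document; each statement's English description precedes it below -/
import Mathlib

section
/- Let (x^k)_{k∈ℕ} be a sequence generated by the ASI algorithm with delay bound τ ≥ 0, let z ∈ C, let μ > 0, and suppose there is ε > 0 such that ε ≤ λ_k ≤ 1/(1 + τ(1/μ + μ) + ε) for all k ∈ ℕ. Define c_j := (τ + 1 − j)μ + ε for j = 1, ..., τ+1. Then the sequence ξ_k := ‖x^k − z‖² + Σ_{ℓ=1}^{τ} c_ℓ ‖x^{k+1−ℓ} − x^{k−ℓ}‖² (with x^{j} understood as x^{1} for j ≤ 0) is a convergent sequence of real numbers. -/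
open Filter Finset
open scoped RealInnerProductSpace

/-!
Every update is a relaxed step towards the fixed point set, taken from a stale iterate `x̂ᵏ`.
Since `S = Id - T` is `½`-cocoercive at the common fixed point `z`, a step from `xᵏ` decreases
`‖xᵏ - z‖²` by about `λ‖S x̂ᵏ‖²`, up to the error `2λ‖S x̂ᵏ‖‖xᵏ - x̂ᵏ‖`. The delay is at most `τ`,
so `‖xᵏ - x̂ᵏ‖` is bounded by the last `τ` step lengths, and Young's inequality with parameter `μ`
turns the error into `μ` times their squares plus `τλ²/μ ‖S x̂ᵏ‖²`. The weights `c` decrease by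
exactly `μ` along the window of the last `τ` steps, which absorbs the `μ`-terms, while the
step-size bound makes the total coefficient of `‖S x̂ᵏ‖²` nonpositive. Hence `ξ` is nonincreasing
from `k = τ + 1` on, and it is nonnegative.
-/

lemma exists_tendsto_of_succ_le_of_nonneg {f : ℕ → ℝ} (N : ℕ)
    (hf : ∀ k, N ≤ k → f (k + 1) ≤ f k) (h0 : ∀ k, 0 ≤ f k) :
    ∃ L, Tendsto f atTop (nhds L) := by
  have hanti : Antitone fun n => f (n + N) :=
    antitone_nat_of_succ_le fun n => by
      simpa only [Nat.add_right_comm n 1 N] using hf (n + N) (Nat.le_add_left N n)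
  have hbdd : BddBelow (Set.range fun n => f (n + N)) := ⟨0, by rintro _ ⟨n, rfl⟩; exact h0 _⟩
  exact ⟨_, (tendsto_add_atTop_iff_nat N).mp (tendsto_atTop_ciInf hanti hbdd)⟩

lemma two_mul_sum_mul_le {ι : Type*} (s : Finset ι) (a : ι → ℝ) (b : ℝ) {μ : ℝ} (hμ : 0 < μ) :
    2 * (∑ i ∈ s, a i) * b ≤ μ * ∑ i ∈ s, a i ^ 2 + #s * μ⁻¹ * b ^ 2 := by
  calc 2 * (∑ i ∈ s, a i) * b = ∑ i ∈ s, 2 * a i * b := by rw [mul_sum, sum_mul]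
    _ ≤ ∑ i ∈ s, (μ * a i ^ 2 + μ⁻¹ * b ^ 2) :=
        sum_le_sum fun i _ => two_mul_le_add_mul_sq hμ
    _ = μ * ∑ i ∈ s, a i ^ 2 + #s * μ⁻¹ * b ^ 2 := by
        rw [sum_add_distrib, ← mul_sum, sum_const, nsmul_eq_mul, mul_assoc]

lemma sum_Icc_one_eq_sum_range {M : Type*} [AddCommMonoid M] (f : ℕ → M) (n : ℕ) :
    ∑ l ∈ Icc 1 n, f l = ∑ i ∈ range n, f (i + 1) := by
  rw [range_eq_Ico, sum_Ico_add', zero_add, Ico_add_one_right_eq_Icc]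

lemma sum_range_window_succ (g c : ℕ → ℝ) {μ : ℝ} (hc : ∀ j, c (j + 1) = c j - μ) (k τ : ℕ) :
    ∑ i ∈ range τ, c (i + 1) * g (k + 1 - i) + c (τ + 1) * g (k + 1 - τ)
      = c 1 * g (k + 1) + ∑ i ∈ range τ, c (i + 1) * g (k - i)
        - μ * ∑ i ∈ range τ, g (k - i) := by
  induction τ with
  | zero => simp
  | succ τ ih =>
    rw [sum_range_succ, ih, sum_range_succ, sum_range_succ, hc (τ + 1),
      show k + 1 - (τ + 1) = k - τ by omega]
    ring

lemma norm_sub_le_sum_range_norm_sub {E : Type*} [SeminormedAddCommGroup E] (x : ℕ → E)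
    (k d : ℕ) : ‖x k - x (k - d)‖ ≤ ∑ i ∈ range d, ‖x (k - i) - x (k - i - 1)‖ := by
  simpa only [dist_eq_norm, Nat.sub_zero, Nat.sub_sub] using
    dist_le_range_sum_dist (fun i => x (k - i)) d

section InnerProductSpace

variable {E : Type*} [NormedAddCommGroup E] [InnerProductSpace ℝ E]

lemma sq_norm_sub_apply_le_two_inner {f : E → E} {u z : E} (hf : ‖f u - f z‖ ≤ ‖u - z‖)
    (hz : f z = z) : ‖u - f u‖ ^ 2 ≤ 2 * ⟪u - z, u - f u⟫ := by
  have h : ‖(u - z) - (u - f u)‖ ^ 2 ≤ ‖u - z‖ ^ 2 := by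
    rw [sub_sub_sub_cancel_left]
    rw [hz] at hf
    gcongr
  rw [norm_sub_sq_real] at h
  linarith

lemma norm_sub_smul_sub_sq_le {p u z s : E} {t : ℝ} (ht : 0 ≤ t)
    (hs : ‖s‖ ^ 2 ≤ 2 * ⟪u - z, s⟫) :
    ‖p - t • s - z‖ ^ 2 ≤ ‖p - z‖ ^ 2 + (t ^ 2 - t) * ‖s‖ ^ 2 + 2 * ‖p - u‖ * (t * ‖s‖) := by
  have hsplit : ⟪p - z, s⟫ = ⟪u - z, s⟫ + ⟪p - u, s⟫ := by
    rw [← inner_add_left, sub_add_sub_cancel']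
  have hcs : -(‖p - u‖ * ‖s‖) ≤ ⟪p - u, s⟫ := neg_le_of_abs_le (abs_real_inner_le_norm _ _)
  rw [sub_right_comm, norm_sub_sq_real, real_inner_smul_right, norm_smul, Real.norm_eq_abs,
    mul_pow, sq_abs, hsplit]
  nlinarith

lemma asi_step_estimate (x : ℕ → E) {f : E → E} (hf : ∀ u v, ‖f u - f v‖ ≤ ‖u - v‖) {z : E}
    (hz : f z = z) {k d τ : ℕ} (hd : d ≤ τ) {t μ ε : ℝ} (ht : 0 ≤ t) (hμ : 0 < μ)
    (htμ : t * (1 + τ * (1 / μ + μ) + ε) ≤ 1)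
    (hstep : x (k + 1) = x k - t • (x (k - d) - f (x (k - d)))) :
    ‖x (k + 1) - z‖ ^ 2 + (τ * μ + ε) * ‖x (k + 1) - x k‖ ^ 2
      ≤ ‖x k - z‖ ^ 2 + μ * ∑ i ∈ range τ, ‖x (k - i) - x (k - i - 1)‖ ^ 2 := by
  set u := x (k - d)
  set s := u - f u
  have hyoung := two_mul_sum_mul_le (range τ) (fun i => ‖x (k - i) - x (k - i - 1)‖) (t * ‖s‖) hμ
  rw [card_range] at hyoung
  set A := ∑ i ∈ range τ, ‖x (k - i) - x (k - i - 1)‖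
  have hdelay : ‖x k - u‖ ≤ A :=
    (norm_sub_le_sum_range_norm_sub x k d).trans <|
      sum_le_sum_of_subset_of_nonneg (range_subset_range.2 hd) fun _ _ _ => norm_nonneg _
  have hdesc := norm_sub_smul_sub_sq_le (p := x k) ht (sq_norm_sub_apply_le_two_inner (hf u z) hz)
  rw [← hstep] at hdesc
  have hmove : ‖x (k + 1) - x k‖ = t * ‖s‖ := by
    rw [hstep, sub_sub_cancel_left, norm_neg, norm_smul, Real.norm_of_nonneg ht]
  have hcoef : t ^ 2 - t + τ * μ⁻¹ * t ^ 2 + (τ * μ + ε) * t ^ 2 ≤ 0 := by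
    rw [one_div] at htμ
    nlinarith
  rw [hmove, mul_pow]
  nlinarith [mul_le_mul_of_nonneg_right hdelay (mul_nonneg ht (norm_nonneg s)),
    mul_nonpos_of_nonpos_of_nonneg hcoef (sq_nonneg ‖s‖)]

end InnerProductSpace

theorem asi_xi_converges_general
    {H : Type*} [NormedAddCommGroup H] [InnerProductSpace ℝ H]
    (m : ℕ) (T : Fin m → H → H)
    (hT : ∀ i, ∀ u v : H, ‖T i u - T i v‖ ≤ ‖u - v‖)
    (x : ℕ → H) (lam : ℕ → ℝ) (idx : ℕ → Fin m) (d : ℕ → ℕ) (τ : ℕ)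
    (hd : ∀ k, d k ≤ min τ (k - 1))
    (hup : ∀ k, 1 ≤ k → x (k + 1) =
      if k ≤ τ then x k
      else x k - lam k • (x (k - d k) - T (idx k) (x (k - d k))))
    (z : H) (hz : ∀ i, T i z = z)
    (μ : ℝ) (hμ : 0 < μ)
    (ε : ℝ) (hε : 0 < ε)
    (hlam2 : ∀ k, ε ≤ lam k ∧ lam k ≤ 1 / (1 + (τ : ℝ) * (1 / μ + μ) + ε))
    (c : ℕ → ℝ) (hc : ∀ j, c j = ((τ : ℝ) + 1 - (j : ℝ)) * μ + ε)
    (ξ : ℕ → ℝ)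
    (hξ : ∀ k, ξ k = ‖x k - z‖ ^ 2
      + ∑ l ∈ Finset.Icc 1 τ, c l * ‖x (k + 1 - l) - x (k - l)‖ ^ 2) :
    ∃ L : ℝ, Tendsto ξ atTop (nhds L) := by
  set g : ℕ → ℝ := fun j => ‖x j - x (j - 1)‖ ^ 2
  have hξg : ∀ k, ξ k = ‖x k - z‖ ^ 2 + ∑ i ∈ range τ, c (i + 1) * g (k - i) := by
    intro k
    rw [hξ, sum_Icc_one_eq_sum_range]
    refine congrArg _ (sum_congr rfl fun i _ => ?_)
    rw [show k + 1 - (i + 1) = k - i by omega, show k - (i + 1) = k - i - 1 by omega]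
  have hc_succ : ∀ j, c (j + 1) = c j - μ := fun j => by rw [hc, hc]; push_cast; ring
  have hmono : ∀ k, τ + 1 ≤ k → ξ (k + 1) ≤ ξ k := by
    intro k hk
    have hstep := hup k (by omega)
    rw [if_neg (by omega)] at hstep
    have hest := asi_step_estimate x (hT (idx k)) (hz (idx k)) ((hd k).trans (min_le_left _ _))
      (hε.le.trans (hlam2 k).1) hμ ((le_div_iff₀ (by positivity)).1 (hlam2 k).2) hstep
    have hwin := sum_range_window_succ g c hc_succ k τ
    have hc1 : c 1 = τ * μ + ε := by rw [hc]; push_cast; ring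
    have hcτ : c (τ + 1) = ε := by rw [hc]; push_cast; ring
    have hdrop : 0 ≤ c (τ + 1) * g (k + 1 - τ) := by rw [hcτ]; positivity
    rw [hξg, hξg]
    simp only [g, add_tsub_cancel_right] at hwin
    rw [hc1] at hwin
    linarith
  refine exists_tendsto_of_succ_le_of_nonneg (τ + 1) hmono fun k => ?_
  rw [hξ]
  refine add_nonneg (sq_nonneg _) (sum_nonneg fun l hl => mul_nonneg ?_ (sq_nonneg _))
  have hlτ : (l : ℝ) ≤ τ := by exact_mod_cast (mem_Icc.1 hl).2
  rw [hc]
  nlinarith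

/-- Lemma 4 of the paper. Let `x` be a sequence generated by the ASI
algorithm with delay bound `τ ≥ 0`, `z ∈ C`, `μ > 0`, and suppose there is `ε > 0` with
`ε ≤ λ k ≤ 1/(1 + τ(1/μ + μ) + ε)` for all `k`. With `c j := (τ + 1 - j)μ + ε`, the
sequence `ξ k := ‖x k - z‖² + ∑_{ℓ=1}^{τ} c ℓ ‖x (k+1-ℓ) - x (k-ℓ)‖²`
(indices `j ≤ 0` understood as `1`, encoded by `x 0 = x 1` with truncated subtraction)
is a convergent sequence of real numbers. -/
theorem asi_xi_converges
    {H : Type*} [NormedAddCommGroup H] [InnerProductSpace ℝ H] [CompleteSpace H]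
    (m : ℕ) (hm : 1 ≤ m) (T : Fin m → H → H)
    (hT : ∀ i, ∀ u v : H, ‖T i u - T i v‖ ≤ ‖u - v‖)
    (x : ℕ → H) (lam : ℕ → ℝ) (idx : ℕ → Fin m) (d : ℕ → ℕ) (τ : ℕ)
    (hlam : ∀ k, 0 < lam k ∧ lam k < 1)
    (hd : ∀ k, d k ≤ min τ (k - 1))
    (hx0 : x 0 = x 1)
    (hup : ∀ k, 1 ≤ k → x (k + 1) =
      if k ≤ τ then x k
      else x k - lam k • (x (k - d k) - T (idx k) (x (k - d k))))
    (z : H) (hz : ∀ i, T i z = z)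
    (μ : ℝ) (hμ : 0 < μ)
    (ε : ℝ) (hε : 0 < ε)
    (hlam2 : ∀ k, ε ≤ lam k ∧ lam k ≤ 1 / (1 + (τ : ℝ) * (1 / μ + μ) + ε))
    (c : ℕ → ℝ) (hc : ∀ j, c j = ((τ : ℝ) + 1 - (j : ℝ)) * μ + ε)
    (ξ : ℕ → ℝ)
    (hξ : ∀ k, ξ k = ‖x k - z‖ ^ 2
      + ∑ l ∈ Finset.Icc 1 τ, c l * ‖x (k + 1 - l) - x (k - l)‖ ^ 2) :
    ∃ L : ℝ, Tendsto ξ atTop (nhds L) :=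
  asi_xi_converges_general m T hT x lam idx d τ hd hup z hz μ hμ ε hε hlam2 c hc ξ hξ
end

section
/- Let (x^k)_{k∈ℕ} be a sequence generated by the ASI algorithm with delay bound τ ≥ 0, let z ∈ C, let μ > 0, and suppose there is ε > 0 such that ε ≤ λ_k ≤ 1/(1 + τ(1/μ + μ) + ε) for all k ∈ ℕ. Then ‖x^{k+1} − x^k‖ → 0 as k → ∞, and the real sequence (‖x^k − z‖)_{k∈ℕ} converges. -/
open Filter Finset RealInnerProductSpace

private lemma amgm_aux {μ ν p q : ℝ} (hμ : 0 < μ) (hν : μ * ν = 1) :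
    p * q ≤ (μ / 2) * q ^ 2 + (ν / 2) * p ^ 2 := by
  have hν0 : 0 < ν := by nlinarith
  have h : 0 ≤ ν * (μ * q - p) ^ 2 := by positivity
  have expand : ν * (μ * q - p) ^ 2
      = μ * (μ * ν) * q ^ 2 - 2 * (μ * ν) * (p * q) + ν * p ^ 2 := by ring
  rw [hν] at expand
  linarith [h, expand.symm.le, expand.le]

private lemma aux_main (τ : ℕ) (a b : ℕ → ℝ) (c ρ : ℝ) (hc : 0 ≤ c) (hρ : 0 < ρ)
    (hann : ∀ k, 0 ≤ a k) (hbnn : ∀ k, 0 ≤ b k)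
    (hrec : ∀ k, τ < k → b (k + 1) ≤ b k - c * τ * a k - ρ * a k
      + c * ∑ i ∈ Finset.range τ, a (k - τ + i)) :
    Tendsto a atTop (nhds 0) ∧ ∃ L, Tendsto b atTop (nhds L) := by
  set W : ℕ → ℝ := fun k => b k + c * ∑ i ∈ Finset.range τ, ((i : ℝ) + 1) * a (k - τ + i)
    with hW
  have hsumnn : ∀ k, 0 ≤ ∑ i ∈ Finset.range τ, ((i : ℝ) + 1) * a (k - τ + i) :=
    fun k => Finset.sum_nonneg fun i _ => mul_nonneg (by positivity) (hann _)
  have hWnn : ∀ k, 0 ≤ W k := fun k => add_nonneg (hbnn k) (mul_nonneg hc (hsumnn k))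
  have hWdec : ∀ k, τ < k → W (k + 1) + ρ * a k ≤ W k := by
    intro k hk
    have hsum : ∑ i ∈ Finset.range τ, ((i : ℝ) + 1) * a (k + 1 - τ + i)
        = ∑ i ∈ Finset.range τ, (i : ℝ) * a (k - τ + i) + (τ : ℝ) * a k := by
      have h1 : ∀ i ∈ Finset.range τ, ((i : ℝ) + 1) * a (k + 1 - τ + i)
          = (fun j : ℕ => (j : ℝ) * a (k - τ + j)) (i + 1) := by
        intro i _
        have hidx : k + 1 - τ + i = k - τ + (i + 1) := by omega
        simp only [hidx]
        push_cast
        ring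
      rw [Finset.sum_congr rfl h1]
      have h2 := Finset.sum_range_succ' (fun j : ℕ => (j : ℝ) * a (k - τ + j)) τ
      have h3 := Finset.sum_range_succ (fun j : ℕ => (j : ℝ) * a (k - τ + j)) τ
      have h4 : k - τ + τ = k := by omega
      simp only [h4, Nat.cast_zero, zero_mul, add_zero] at h2 h3
      linarith [h2, h3]
    have hsplit : ∑ i ∈ Finset.range τ, ((i : ℝ) + 1) * a (k - τ + i)
        = ∑ i ∈ Finset.range τ, (i : ℝ) * a (k - τ + i)
          + ∑ i ∈ Finset.range τ, a (k - τ + i) := by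
      rw [← Finset.sum_add_distrib]
      exact Finset.sum_congr rfl fun i _ => by ring
    have hr := hrec k hk
    simp only [hW]
    rw [hsum, hsplit]
    have e1 : c * (∑ i ∈ Finset.range τ, (i : ℝ) * a (k - τ + i) + (τ : ℝ) * a k)
        = c * ∑ i ∈ Finset.range τ, (i : ℝ) * a (k - τ + i) + c * (τ : ℝ) * a k := by ring
    have e2 : c * (∑ i ∈ Finset.range τ, (i : ℝ) * a (k - τ + i)
          + ∑ i ∈ Finset.range τ, a (k - τ + i))
        = c * ∑ i ∈ Finset.range τ, (i : ℝ) * a (k - τ + i)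
          + c * ∑ i ∈ Finset.range τ, a (k - τ + i) := by ring
    rw [e1, e2]
    linarith [hr]
  have hVanti : Antitone (fun n => W (n + (τ + 1))) := by
    apply antitone_nat_of_succ_le
    intro n
    have h1 := hWdec (n + (τ + 1)) (by omega)
    have h2 : 0 ≤ ρ * a (n + (τ + 1)) := mul_nonneg hρ.le (hann _)
    have hidx : n + 1 + (τ + 1) = n + (τ + 1) + 1 := by omega
    simp only [hidx]
    linarith
  have hpartialkey : ∀ N, ρ * ∑ n ∈ Finset.range N, a (n + (τ + 1)) + W (N + (τ + 1)) ≤ W (τ + 1) := by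
    intro N
    induction N with
    | zero => simp
    | succ N ih =>
      rw [Finset.sum_range_succ]
      have h1 := hWdec (N + (τ + 1)) (by omega)
      have hidx : N + (τ + 1) + 1 = N + 1 + (τ + 1) := by omega
      rw [hidx] at h1
      have := hann (N + (τ + 1))
      nlinarith [h1, ih]
  have hpartial : ∀ N, ∑ n ∈ Finset.range N, a (n + (τ + 1)) ≤ W (τ + 1) / ρ := by
    intro N
    rw [le_div_iff₀ hρ]
    have h := hpartialkey N
    have := hWnn (N + (τ + 1))
    nlinarith
  have hsummable : Summable fun n => a (n + (τ + 1)) :=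
    summable_of_sum_range_le (fun n => hann _) hpartial
  have ha0 : Tendsto a atTop (nhds 0) := by
    have h := hsummable.tendsto_atTop_zero
    rwa [Filter.tendsto_add_atTop_iff_nat (τ + 1)] at h
  refine ⟨ha0, ?_⟩
  have hbdd : BddBelow (Set.range fun n => W (n + (τ + 1))) := by
    refine ⟨0, ?_⟩
    rintro y ⟨n, rfl⟩
    exact hWnn _
  have hVconv : Tendsto (fun n => W (n + (τ + 1))) atTop (nhds (⨅ n, W (n + (τ + 1)))) :=
    tendsto_atTop_ciInf hVanti hbdd
  have hrem : Tendsto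
      (fun n => c * ∑ i ∈ Finset.range τ, ((i : ℝ) + 1) * a (n + (τ + 1) - τ + i))
      atTop (nhds 0) := by
    have hterm : ∀ i ∈ Finset.range τ,
        Tendsto (fun n => ((i : ℝ) + 1) * a (n + (1 + i))) atTop (nhds 0) := by
      intro i _
      have h := (Filter.tendsto_add_atTop_iff_nat (1 + i)).mpr ha0
      have := h.const_mul ((i : ℝ) + 1)
      rwa [mul_zero] at this
    have hsum := tendsto_finset_sum (Finset.range τ) hterm
    rw [Finset.sum_const_zero] at hsum
    have h2 := hsum.const_mul c
    rw [mul_zero] at h2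
    refine h2.congr fun n => ?_
    congr 1
    refine Finset.sum_congr rfl fun i _ => ?_
    have : n + (1 + i) = n + (τ + 1) - τ + i := by omega
    rw [this]
  refine ⟨⨅ n, W (n + (τ + 1)), ?_⟩
  rw [← Filter.tendsto_add_atTop_iff_nat (τ + 1)]
  have hfin := hVconv.sub hrem
  rw [sub_zero] at hfin
  refine hfin.congr fun n => ?_
  simp only [hW]
  ring

set_option maxHeartbeats 1000000 in
/-- Lemma 5 of the paper. Let `x` be a sequence generated by the ASI
algorithm with delay bound `τ ≥ 0`, `z ∈ C`, `μ > 0`, and suppose there is `ε > 0` with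
`ε ≤ λ k ≤ 1/(1 + τ(1/μ + μ) + ε)` for all `k`. Then `‖x (k+1) - x k‖ → 0` and the real
sequence `‖x k - z‖` converges. -/
theorem asi_successive_differences_vanish
    {H : Type*} [NormedAddCommGroup H] [InnerProductSpace ℝ H] [CompleteSpace H]
    (m : ℕ) (hm : 1 ≤ m) (T : Fin m → H → H)
    (hT : ∀ i, ∀ u v : H, ‖T i u - T i v‖ ≤ ‖u - v‖)
    (x : ℕ → H) (lam : ℕ → ℝ) (idx : ℕ → Fin m) (d : ℕ → ℕ) (τ : ℕ)
    (hlam : ∀ k, 0 < lam k ∧ lam k < 1)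
    (hd : ∀ k, d k ≤ min τ (k - 1))
    (hx0 : x 0 = x 1)
    (hup : ∀ k, 1 ≤ k → x (k + 1) =
      if k ≤ τ then x k
      else x k - lam k • (x (k - d k) - T (idx k) (x (k - d k))))
    (z : H) (hz : ∀ i, T i z = z)
    (μ : ℝ) (hμ : 0 < μ)
    (ε : ℝ) (hε : 0 < ε)
    (hlam2 : ∀ k, ε ≤ lam k ∧ lam k ≤ 1 / (1 + (τ : ℝ) * (1 / μ + μ) + ε)) :
    Tendsto (fun k => ‖x (k + 1) - x k‖) atTop (nhds 0) ∧
      ∃ L : ℝ, Tendsto (fun k => ‖x k - z‖) atTop (nhds L) := by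
  classical
  have hνpos : (0:ℝ) < 1 / μ := by positivity
  set ν : ℝ := 1 / μ with hν_def
  have hμν : μ * ν = 1 := by
    rw [hν_def]; field_simp
  have hden : (0:ℝ) < 1 + (τ : ℝ) * (1 / μ + μ) + ε := by
    have h1 : (0:ℝ) ≤ (τ : ℝ) * (1 / μ + μ) :=
      mul_nonneg (Nat.cast_nonneg _) (by linarith)
    linarith
  set lb : ℝ := 1 / (1 + (τ : ℝ) * (1 / μ + μ) + ε) with hlb_def
  have hlbpos : 0 < lb := by rw [hlb_def]; positivity
  have hlbid : lb * (1 + (τ : ℝ) * (ν + μ) + ε) = 1 := by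
    rw [hlb_def, hν_def]
    field_simp
  have hlamle : ∀ k, lam k ≤ lb := fun k => (hlam2 k).2
  set S : ℕ → H := fun k => x (k - d k) - T (idx k) (x (k - d k)) with hS_def
  set g : ℕ → ℝ := fun k => ‖S k‖ with hg_def
  set a : ℕ → ℝ := fun k => lam k * g k ^ 2 with ha_def
  set bb : ℕ → ℝ := fun k => ‖x k - z‖ ^ 2 with hbb_def
  have hgnn : ∀ k, 0 ≤ g k := fun k => norm_nonneg _
  have hann : ∀ k, 0 ≤ a k := fun k => mul_nonneg (hlam k).1.le (sq_nonneg _)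
  have hbbnn : ∀ k, 0 ≤ bb k := fun k => sq_nonneg _
  -- cocoercivity
  have coco : ∀ k, g k ^ 2 ≤ 2 * ⟪x (k - d k) - z, S k⟫ := by
    intro k
    have h1 : ‖T (idx k) (x (k - d k)) - z‖ ≤ ‖x (k - d k) - z‖ := by
      have h := hT (idx k) (x (k - d k)) z
      rwa [hz (idx k)] at h
    have h2 : ‖T (idx k) (x (k - d k)) - z‖ ^ 2 ≤ ‖x (k - d k) - z‖ ^ 2 :=
      pow_le_pow_left₀ (norm_nonneg _) h1 2
    have h3 : T (idx k) (x (k - d k)) - z = (x (k - d k) - z) - S k := by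
      simp only [hS_def]; abel
    rw [h3, norm_sub_sq_real] at h2
    have hgk : g k = ‖S k‖ := by rw [hg_def]
    rw [hgk]
    linarith
  -- step bound
  have hDle : ∀ j, ‖x (j + 1) - x j‖ ≤ lam j * g j := by
    intro j
    have hnn : 0 ≤ lam j * g j := mul_nonneg (hlam j).1.le (hgnn j)
    rcases Nat.eq_zero_or_pos j with hj | hj
    · subst hj
      rw [← hx0, sub_self, norm_zero]
      exact hnn
    · by_cases hjτ : j ≤ τ
      · rw [hup j hj, if_pos hjτ, sub_self, norm_zero]
        exact hnn
      · rw [hup j hj, if_neg hjτ]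
        have h0 : x j - lam j • (x (j - d j) - T (idx j) (x (j - d j))) - x j
            = -(lam j • S j) := by
          simp only [hS_def]; abel
        rw [h0, norm_neg, norm_smul, Real.norm_eq_abs, abs_of_pos (hlam j).1]
  have hA_nonneg : ∀ k, 0 ≤ ∑ j ∈ Finset.Ico (k - τ) k, a j :=
    fun k => Finset.sum_nonneg fun j _ => hann j
  -- main recurrence
  have hrec : ∀ k, τ < k → bb (k + 1) ≤ bb k - (lb * ν) * τ * a k - (lb * ε) * a k
      + (lb * ν) * ∑ j ∈ Finset.Ico (k - τ) k, a j := by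
    intro k hk
    have hxk : x (k + 1) = x k - lam k • S k := by
      rw [hup k (by omega), if_neg (by omega)]
    have hl := hlam k
    have hexp : bb (k + 1) = bb k - 2 * (lam k * ⟪x k - z, S k⟫) + lam k ^ 2 * g k ^ 2 := by
      simp only [hbb_def, hxk]
      have h0 : x k - lam k • S k - z = (x k - z) - lam k • S k := by abel
      rw [h0, norm_sub_sq_real, real_inner_smul_right, norm_smul, Real.norm_eq_abs,
        abs_of_pos hl.1, mul_pow]
    have hc1 : g k ^ 2 ≤ 2 * ⟪x (k - d k) - z, S k⟫ := coco k
    have hsplit : ⟪x k - z, S k⟫ = ⟪x (k - d k) - z, S k⟫ + ⟪x k - x (k - d k), S k⟫ := by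
      rw [← inner_add_left]
      congr 1
      abel
    have hdk1 : d k ≤ τ := le_trans (hd k) (min_le_left _ _)
    have hdk2 : d k ≤ k - 1 := le_trans (hd k) (min_le_right _ _)
    -- telescoping
    have hidx : k - (k - d k) = d k := by omega
    have hidx2 : k - d k + d k = k := by omega
    have htel' : x k - x (k - d k) = ∑ j ∈ Finset.Ico (k - d k) k, (x (j + 1) - x j) := by
      calc x k - x (k - d k)
          = ∑ i ∈ Finset.range (d k), (x (k - d k + (i + 1)) - x (k - d k + i)) := by
            have h := Finset.sum_range_sub (fun i => x (k - d k + i)) (d k)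
            simp only [add_zero] at h
            rw [hidx2] at h
            exact h.symm
        _ = ∑ i ∈ Finset.range (d k), (x (k - d k + i + 1) - x (k - d k + i)) := by
            refine Finset.sum_congr rfl fun i _ => ?_
            rw [add_assoc]
        _ = ∑ j ∈ Finset.Ico (k - d k) k, (x (j + 1) - x j) := by
            rw [Finset.sum_Ico_eq_sum_range, hidx]
    have hnorm1 : ‖x k - x (k - d k)‖ ≤ ∑ j ∈ Finset.Ico (k - τ) k, lam j * g j := by
      rw [htel']
      refine le_trans (norm_sum_le _ _) ?_
      refine le_trans (Finset.sum_le_sum_of_subset_of_nonneg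
        (Finset.Ico_subset_Ico (Nat.sub_le_sub_left hdk1 k) le_rfl) (fun j _ _ => norm_nonneg _)) ?_
      exact Finset.sum_le_sum fun j _ => hDle j
    have hc2 : -(‖x k - x (k - d k)‖ * g k) ≤ ⟪x k - x (k - d k), S k⟫ := by
      have h := abs_real_inner_le_norm (x k - x (k - d k)) (S k)
      have h2 := neg_abs_le (⟪x k - x (k - d k), S k⟫)
      have hgk : g k = ‖S k‖ := by rw [hg_def]
      rw [hgk]
      linarith
    have hc2' : -((∑ j ∈ Finset.Ico (k - τ) k, lam j * g j) * g k)
        ≤ ⟪x k - x (k - d k), S k⟫ := by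
      have h := mul_le_mul_of_nonneg_right hnorm1 (hgnn k)
      linarith
    have hPsum : (∑ j ∈ Finset.Ico (k - τ) k, lam j * g j) * g k
        ≤ (μ / 2) * g k ^ 2 * ((τ : ℝ) * lb) + (ν / 2) * ∑ j ∈ Finset.Ico (k - τ) k, a j := by
      rw [Finset.sum_mul]
      have hterm : ∀ j ∈ Finset.Ico (k - τ) k,
          lam j * g j * g k ≤ lam j * ((μ / 2) * g k ^ 2 + (ν / 2) * g j ^ 2) := by
        intro j _
        have ham := amgm_aux (p := g j) (q := g k) hμ hμν
        calc lam j * g j * g k = lam j * (g j * g k) := by ring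
          _ ≤ _ := mul_le_mul_of_nonneg_left ham (hlam j).1.le
      refine le_trans (Finset.sum_le_sum hterm) ?_
      have hsplit2 : ∑ j ∈ Finset.Ico (k - τ) k, lam j * ((μ / 2) * g k ^ 2 + (ν / 2) * g j ^ 2)
          = (μ / 2) * g k ^ 2 * (∑ j ∈ Finset.Ico (k - τ) k, lam j)
            + (ν / 2) * ∑ j ∈ Finset.Ico (k - τ) k, a j := by
        rw [Finset.mul_sum, Finset.mul_sum, ← Finset.sum_add_distrib]
        refine Finset.sum_congr rfl fun j _ => ?_
        simp only [ha_def]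
        ring
      rw [hsplit2]
      have hsumlam : ∑ j ∈ Finset.Ico (k - τ) k, lam j ≤ (τ : ℝ) * lb := by
        have hcard : (Finset.Ico (k - τ) k).card = τ := by rw [Nat.card_Ico]; omega
        calc ∑ j ∈ Finset.Ico (k - τ) k, lam j ≤ ∑ _j ∈ Finset.Ico (k - τ) k, lb :=
              Finset.sum_le_sum fun j _ => hlamle j
          _ = (τ : ℝ) * lb := by rw [Finset.sum_const, hcard, nsmul_eq_mul]
      have h1 : (0:ℝ) ≤ (μ / 2) * g k ^ 2 := by positivity
      have h2 := mul_le_mul_of_nonneg_left hsumlam h1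
      linarith
    -- lower bound on the full inner product
    have hI : g k ^ 2 / 2
        - ((μ / 2) * g k ^ 2 * ((τ : ℝ) * lb) + (ν / 2) * ∑ j ∈ Finset.Ico (k - τ) k, a j)
        ≤ ⟪x k - z, S k⟫ := by
      rw [hsplit]
      linarith [hc1, hc2', hPsum]
    have hmul := mul_le_mul_of_nonneg_left hI (by linarith [hl.1] : (0:ℝ) ≤ 2 * lam k)
    -- final assembly
    have hAnn := hA_nonneg k
    have hid : lb + (τ : ℝ) * lb * ν + μ * (τ : ℝ) * lb + lb * ε = 1 := by
      linear_combination hlbid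
    set A := ∑ j ∈ Finset.Ico (k - τ) k, a j with hA_def
    have hfinal : (lam k - lb) * (lam k * g k ^ 2 + ν * A) ≤ 0 :=
      mul_nonpos_of_nonpos_of_nonneg (by linarith [hlamle k])
        (add_nonneg (mul_nonneg hl.1.le (sq_nonneg _)) (mul_nonneg hνpos.le hAnn))
    have hkey : - (lam k * g k ^ 2) + lam k * μ * (τ : ℝ) * lb * g k ^ 2 + lam k * ν * A
        + lam k ^ 2 * g k ^ 2
        ≤ - (lb * ν) * (τ : ℝ) * (lam k * g k ^ 2) - lb * ε * (lam k * g k ^ 2) + lb * ν * A := by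
      have e : (- (lam k * g k ^ 2) + lam k * μ * (τ : ℝ) * lb * g k ^ 2 + lam k * ν * A
            + lam k ^ 2 * g k ^ 2)
          - (- (lb * ν) * (τ : ℝ) * (lam k * g k ^ 2) - lb * ε * (lam k * g k ^ 2) + lb * ν * A)
          = (lam k - lb) * (lam k * g k ^ 2 + ν * A)
            + (lam k * g k ^ 2) * ((lb + (τ : ℝ) * lb * ν + μ * (τ : ℝ) * lb + lb * ε) - 1) := by
        ring
      rw [hid, sub_self, mul_zero, add_zero] at e
      linarith [hfinal, e.le, e.ge]
    simp only [ha_def]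
    linarith [hexp, hmul, hkey]
  -- convert Ico sum to range form
  have hrec' : ∀ k, τ < k → bb (k + 1) ≤ bb k - (lb * ν) * τ * a k - (lb * ε) * a k
      + (lb * ν) * ∑ i ∈ Finset.range τ, a (k - τ + i) := by
    intro k hk
    have h := hrec k hk
    have hs : ∑ j ∈ Finset.Ico (k - τ) k, a j = ∑ i ∈ Finset.range τ, a (k - τ + i) := by
      rw [Finset.sum_Ico_eq_sum_range]
      have hidx : k - (k - τ) = τ := by omega
      rw [hidx]
    rwa [hs] at h
  obtain ⟨ha0, L0, hbconv⟩ := aux_main τ a bb (lb * ν) (lb * ε)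
    (mul_nonneg hlbpos.le hνpos.le) (mul_pos hlbpos hε) hann hbbnn hrec'
  constructor
  · have hD2 : ∀ k, ‖x (k + 1) - x k‖ ^ 2 ≤ a k := by
      intro k
      have h1 : ‖x (k + 1) - x k‖ ^ 2 ≤ (lam k * g k) ^ 2 :=
        pow_le_pow_left₀ (norm_nonneg _) (hDle k) 2
      have hl := hlam k
      have h2 : (0:ℝ) ≤ (1 - lam k) * lam k * g k ^ 2 :=
        mul_nonneg (mul_nonneg (by linarith [hl.2]) hl.1.le) (sq_nonneg _)
      simp only [ha_def]
      nlinarith [h1, h2]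
    have hsq : Tendsto (fun k => ‖x (k + 1) - x k‖ ^ 2) atTop (nhds 0) :=
      squeeze_zero (fun k => sq_nonneg _) hD2 ha0
    have h := hsq.sqrt
    rw [Real.sqrt_zero] at h
    exact h.congr fun k => Real.sqrt_sq (norm_nonneg _)
  · refine ⟨Real.sqrt L0, ?_⟩
    have h := hbconv.sqrt
    refine h.congr fun k => ?_
    simp only [hbb_def]
    exact Real.sqrt_sq (norm_nonneg _)
end

section
/- Let (x^k)_{k∈ℕ} be a sequence generated by the ASI algorithm with delay bound τ ≥ 0, where the control sequence (i_k) is an almost cyclic control on {1,...,m} and there is ε > 0 such that λ_k ≥ ε for all k ∈ ℕ. If ‖x^{k+1} − x^k‖ → 0 as k → ∞, then ‖T_i(x^k) − x^k‖ → 0 as k → ∞ for every i ∈ {1, ..., m}. -/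
open Filter Finset

/-- Lemma 7 of the paper. Let `x` be a sequence generated by the ASI
algorithm with delay bound `τ ≥ 0`, where the control sequence `idx` is an almost cyclic
control on `{1, ..., m}` and there is `ε > 0` with `λ k ≥ ε` for all `k`. If
`‖x (k+1) - x k‖ → 0`, then `‖T i (x k) - x k‖ → 0` for every `i`. -/
theorem asi_operator_residuals_vanish
    {H : Type*} [NormedAddCommGroup H] [InnerProductSpace ℝ H] [CompleteSpace H]
    (m : ℕ) (hm : 1 ≤ m) (T : Fin m → H → H)
    (hT : ∀ i, ∀ u v : H, ‖T i u - T i v‖ ≤ ‖u - v‖)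
    (hcommon : ∃ z : H, ∀ i, T i z = z)
    (x : ℕ → H) (lam : ℕ → ℝ) (idx : ℕ → Fin m) (d : ℕ → ℕ) (τ : ℕ)
    (hlam : ∀ k, 0 < lam k ∧ lam k < 1)
    (hcyc : ∃ M : ℕ, m ≤ M ∧ ∀ k, ∀ j : Fin m,
      ∃ l, k + 1 ≤ l ∧ l ≤ k + M ∧ idx l = j)
    (hd : ∀ k, d k ≤ min τ (k - 1))
    (hx0 : x 0 = x 1)
    (hup : ∀ k, 1 ≤ k → x (k + 1) =
      if k ≤ τ then x k
      else x k - lam k • (x (k - d k) - T (idx k) (x (k - d k))))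
    (ε : ℝ) (hε : 0 < ε) (hlamε : ∀ k, ε ≤ lam k)
    (hdiff : Tendsto (fun k => ‖x (k + 1) - x k‖) atTop (nhds 0)) :
    ∀ i, Tendsto (fun k => ‖T i (x k) - x k‖) atTop (nhds 0) := by
  obtain ⟨M, hmM, hM⟩ := hcyc
  set D : ℕ → ℝ := fun k => ‖x (k + 1) - x k‖ with hDdef
  have hD0 : ∀ k, 0 ≤ D k := fun k => norm_nonneg _
  -- telescoping
  have tele : ∀ j k : ℕ, j ≤ k → ‖x k - x j‖ ≤ ∑ t ∈ Finset.Ico j k, D t := by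
    intro j k hjk
    induction k with
    | zero =>
      have : j = 0 := Nat.le_zero.mp hjk
      simp [this]
    | succ n ih =>
      rcases Nat.lt_or_ge j (n + 1) with h | h
      · have hjn : j ≤ n := Nat.lt_succ_iff.mp h
        have h1 : ‖x (n + 1) - x j‖ ≤ ‖x (n + 1) - x n‖ + ‖x n - x j‖ := by
          have := dist_triangle (x (n + 1)) (x n) (x j)
          simpa [dist_eq_norm] using this
        have h2 := ih hjn
        rw [Finset.sum_Ico_succ_top hjn]
        have : ‖x (n + 1) - x n‖ = D n := rfl
        linarith
      · have : j = n + 1 := le_antisymm hjk h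
        simp [this]
  -- residual difference bound
  have Sdiff : ∀ (i : Fin m) (u v : H),
      ‖u - T i u‖ ≤ ‖v - T i v‖ + 2 * ‖u - v‖ := by
    intro i u v
    have key : u - T i u = (v - T i v) + ((u - v) - (T i u - T i v)) := by abel
    calc ‖u - T i u‖ = ‖(v - T i v) + ((u - v) - (T i u - T i v))‖ := by rw [← key]
      _ ≤ ‖v - T i v‖ + ‖(u - v) - (T i u - T i v)‖ := norm_add_le _ _
      _ ≤ ‖v - T i v‖ + (‖u - v‖ + ‖T i u - T i v‖) := by
          have := norm_sub_le (u - v) (T i u - T i v)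
          linarith
      _ ≤ ‖v - T i v‖ + 2 * ‖u - v‖ := by
          have := hT i u v
          linarith
  set G : ℕ → ℝ := fun k => ‖x k - T (idx k) (x k)‖ with hGdef
  have hG0 : ∀ k, 0 ≤ G k := fun k => norm_nonneg _
  -- the bound on G for k ≥ τ + 1
  have hGbound : ∀ k, τ + 1 ≤ k →
      G k ≤ D k / ε + 2 * ∑ j ∈ Finset.range τ, D (k - τ + j) := by
    intro k hk
    have hk1 : 1 ≤ k := le_trans (Nat.le_add_left 1 τ) hk
    have hknτ : ¬ k ≤ τ := by omega
    have hupk := hup k hk1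
    rw [if_neg hknτ] at hupk
    set w : H := x (k - d k) - T (idx k) (x (k - d k)) with hw
    have hdiffeq : x (k + 1) - x k = -(lam k • w) := by
      rw [hupk]; abel
    have hDk : D k = lam k * ‖w‖ := by
      have : D k = ‖x (k + 1) - x k‖ := rfl
      rw [this, hdiffeq, norm_neg, norm_smul, Real.norm_eq_abs,
        abs_of_pos (hlam k).1]
    have hwle : ‖w‖ ≤ D k / ε := by
      rw [le_div_iff₀ hε]
      rw [hDk]
      calc ‖w‖ * ε = ε * ‖w‖ := by ring
        _ ≤ lam k * ‖w‖ := mul_le_mul_of_nonneg_right (hlamε k) (norm_nonneg _)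
    -- delay bound
    have hdτ : d k ≤ τ := (hd k).trans (min_le_left _ _)
    have hsub : k - d k ≤ k := Nat.sub_le _ _
    have hxk : ‖x k - x (k - d k)‖ ≤ ∑ j ∈ Finset.range τ, D (k - τ + j) := by
      have h1 : ‖x k - x (k - d k)‖ ≤ ∑ t ∈ Finset.Ico (k - d k) k, D t :=
        tele (k - d k) k hsub
      have h2 : (∑ t ∈ Finset.Ico (k - d k) k, D t) ≤
          ∑ t ∈ Finset.Ico (k - τ) k, D t := by
        apply Finset.sum_le_sum_of_subset_of_nonneg
        · exact Finset.Ico_subset_Ico (Nat.sub_le_sub_left hdτ k) le_rfl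
        · intro t _ _; exact hD0 t
      have h3 : (∑ t ∈ Finset.Ico (k - τ) k, D t) =
          ∑ j ∈ Finset.range τ, D (k - τ + j) := by
        rw [Finset.sum_Ico_eq_sum_range, show k - (k - τ) = τ by omega]
      linarith [h1, h2, h3.le, h3.ge]
    have hS := Sdiff (idx k) (x k) (x (k - d k))
    have : G k ≤ ‖w‖ + 2 * ‖x k - x (k - d k)‖ := hS
    linarith
  -- the bound F tends to 0
  have hshift : ∀ c : ℕ, Tendsto (fun k => D (k - τ + c)) atTop (nhds 0) := by
    intro c
    have h1 : Tendsto (fun k : ℕ => k - τ + c) atTop atTop :=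
      (tendsto_add_atTop_nat c).comp (tendsto_sub_atTop_nat τ)
    exact hdiff.comp h1
  have hsumτ : Tendsto (fun k => ∑ j ∈ Finset.range τ, D (k - τ + j)) atTop (nhds 0) := by
    have := tendsto_finset_sum (Finset.range τ)
      (fun j _ => hshift j)
    simpa using this
  have hF : Tendsto (fun k => D k / ε + 2 * ∑ j ∈ Finset.range τ, D (k - τ + j))
      atTop (nhds 0) := by
    have h1 : Tendsto (fun k => D k / ε) atTop (nhds 0) := by
      simpa using hdiff.div_const ε
    have h2 := hsumτ.const_mul (2 : ℝ)
    simpa using h1.add h2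
  have hG : Tendsto G atTop (nhds 0) := by
    apply squeeze_zero' (Eventually.of_forall hG0) _ hF
    filter_upwards [eventually_ge_atTop (τ + 1)] with k hk
    exact hGbound k hk
  -- final step
  intro i
  have hbound : ∀ k, ‖x k - T i (x k)‖ ≤
      (∑ j ∈ Finset.range M, G (k + 1 + j)) + 2 * ∑ j ∈ Finset.range M, D (k + j) := by
    intro k
    obtain ⟨l, hl1, hl2, hl3⟩ := hM k i
    have hS : ‖x k - T i (x k)‖ ≤ ‖x l - T i (x l)‖ + 2 * ‖x k - x l‖ := Sdiff i (x k) (x l)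
    have hGl : ‖x l - T i (x l)‖ = G l := by rw [hGdef]; simp [hl3]
    have hGsum : G l ≤ ∑ j ∈ Finset.range M, G (k + 1 + j) := by
      have hmem : l - (k + 1) ∈ Finset.range M := by
        rw [Finset.mem_range]; omega
      have heq : k + 1 + (l - (k + 1)) = l := by omega
      calc G l = G (k + 1 + (l - (k + 1))) := by rw [heq]
        _ ≤ ∑ j ∈ Finset.range M, G (k + 1 + j) :=
          Finset.single_le_sum (fun j _ => hG0 _) hmem
    have hxkl : ‖x k - x l‖ ≤ ∑ j ∈ Finset.range M, D (k + j) := by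
      rw [norm_sub_rev]
      have h1 : ‖x l - x k‖ ≤ ∑ t ∈ Finset.Ico k l, D t := tele k l (by omega)
      have h2 : (∑ t ∈ Finset.Ico k l, D t) ≤ ∑ t ∈ Finset.Ico k (k + M), D t := by
        apply Finset.sum_le_sum_of_subset_of_nonneg
        · exact Finset.Ico_subset_Ico le_rfl hl2
        · intro t _ _; exact hD0 t
      have h3 : (∑ t ∈ Finset.Ico k (k + M), D t) = ∑ j ∈ Finset.range M, D (k + j) := by
        rw [Finset.sum_Ico_eq_sum_range, show k + M - k = M by omega]
      linarith [h3.le]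
    linarith
  have hH : Tendsto (fun k => (∑ j ∈ Finset.range M, G (k + 1 + j)) +
      2 * ∑ j ∈ Finset.range M, D (k + j)) atTop (nhds 0) := by
    have h1 : Tendsto (fun k => ∑ j ∈ Finset.range M, G (k + 1 + j)) atTop (nhds 0) := by
      have := tendsto_finset_sum (Finset.range M) (fun j _ =>
        hG.comp ((tendsto_add_atTop_nat j).comp (tendsto_add_atTop_nat 1)))
      simpa [Function.comp] using this
    have h2 : Tendsto (fun k => ∑ j ∈ Finset.range M, D (k + j)) atTop (nhds 0) := by
      have := tendsto_finset_sum (Finset.range M) (fun j _ =>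
        hdiff.comp (tendsto_add_atTop_nat j))
      simpa [Function.comp] using this
    simpa using h1.add (h2.const_mul (2 : ℝ))
  have : Tendsto (fun k => ‖x k - T i (x k)‖) atTop (nhds 0) :=
    squeeze_zero (fun k => norm_nonneg _) hbound hH
  have heq : (fun k => ‖T i (x k) - x k‖) = fun k => ‖x k - T i (x k)‖ := by
    funext k; exact norm_sub_rev _ _
  rw [heq]
  exact this
end

section
/- Let (x^k)_{k∈ℕ} be a sequence generated by the ASI algorithm with delay bound τ ≥ 0, where the control sequence (i_k) is an almost cyclic control on {1,...,m}. If there is ε > 0 such that ε ≤ λ_k ≤ 1/(2τ + 1 + ε) for all k ∈ ℕ, then (x^k) converges weakly to a common fixed point x* ∈ C = ⋂_{i=1}^m Fix(T_i). -/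
/-!
Along the ASI iteration the energy `‖x (k+τ+1) - z‖² + ∑ᵢ (i+1) ‖x (k+i+2) - x (k+i+1)‖²`
decreases by at least `ε ‖x (k+τ+2) - x (k+τ+1)‖²` for every common fixed point `z`: the error
caused by the delayed evaluation point is bounded by the last `τ` step lengths, and the weighted
sum of squared step lengths absorbs it as long as `λ ≤ 1/(2τ + 1 + ε)`. Hence the step lengths
tend to zero and `‖x k - z‖` converges for every `z ∈ C`. Almost cyclic control and
nonexpansiveness turn this into `‖x k - T i (x k)‖ → 0` for every `i`, so by the demiclosedness
principle every weak cluster point lies in `C`, and Opial's argument gives weak convergence.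
-/

open Filter Finset Function Topology
open scoped RealInnerProductSpace

section Normed

variable {E : Type*} [SeminormedAddCommGroup E]

theorem dist_le_sum_range_dist_succ {α : Type*} [PseudoMetricSpace α] (x : ℕ → α) {a b c N : ℕ}
    (hca : c ≤ a) (hab : a ≤ b) (hbc : b ≤ c + N) :
    dist (x a) (x b) ≤ ∑ i ∈ range N, dist (x (c + i)) (x (c + i + 1)) :=
  calc dist (x a) (x b) ≤ ∑ j ∈ Ico a b, dist (x j) (x (j + 1)) := dist_le_Ico_sum_dist x hab
    _ ≤ ∑ j ∈ Ico c (c + N), dist (x j) (x (j + 1)) :=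
      sum_le_sum_of_subset_of_nonneg (Ico_subset_Ico hca hbc) fun _ _ _ => dist_nonneg
    _ = ∑ i ∈ range N, dist (x (c + i)) (x (c + i + 1)) := by
      rw [sum_Ico_eq_sum_range, Nat.add_sub_cancel_left]

theorem tendsto_dist_of_tendsto_dist_succ {α : Type*} [PseudoMetricSpace α] {x : ℕ → α}
    (hx : Tendsto (fun n => dist (x n) (x (n + 1))) atTop (𝓝 0)) {a b : ℕ → ℕ} {N : ℕ}
    (ha : Tendsto a atTop atTop) (hab : ∀ n, a n ≤ b n) (hbN : ∀ n, b n ≤ a n + N) :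
    Tendsto (fun n => dist (x (a n)) (x (b n))) atTop (𝓝 0) := by
  have hsum : Tendsto (fun n => ∑ i ∈ range N, dist (x (a n + i)) (x (a n + i + 1))) atTop
      (𝓝 0) := by
    simpa using tendsto_finsetSum (range N) fun i _ =>
      hx.comp ((tendsto_add_atTop_nat i).comp ha)
  exact squeeze_zero (fun _ => dist_nonneg)
    (fun n => dist_le_sum_range_dist_succ x le_rfl (hab n) (hbN n)) hsum

theorem sum_range_succ_mul_add_shift (v : ℕ → ℝ) (τ k : ℕ) :
    ∑ i ∈ range τ, (i + 1 : ℝ) * v (k + 1 + i) + ∑ i ∈ range τ, v (k + i) =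
      ∑ i ∈ range τ, (i + 1 : ℝ) * v (k + i) + τ * v (k + τ) := by
  induction τ with
  | zero => simp
  | succ τ ih =>
    simp only [sum_range_succ, Nat.cast_succ]
    rw [show k + 1 + τ = k + (τ + 1) by omega]
    linarith

theorem two_mul_mul_sum_le {ι : Type*} (s : Finset ι) (a : ℝ) (u : ι → ℝ) :
    2 * a * ∑ i ∈ s, u i ≤ #s * a ^ 2 + ∑ i ∈ s, u i ^ 2 :=
  calc 2 * a * ∑ i ∈ s, u i = ∑ i ∈ s, 2 * a * u i := mul_sum _ _ _
    _ ≤ ∑ i ∈ s, (a ^ 2 + u i ^ 2) := sum_le_sum fun i _ => two_mul_le_add_sq _ _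
    _ = #s * a ^ 2 + ∑ i ∈ s, u i ^ 2 := by rw [sum_add_distrib, sum_const, nsmul_eq_mul]

theorem exists_tendsto_and_tendsto_zero_of_add_le {Φ v : ℕ → ℝ} {c : ℝ} (hc : 0 < c)
    (hΦ : ∀ k, 0 ≤ Φ k) (hv : ∀ k, 0 ≤ v k) (hstep : ∀ k, Φ (k + 1) + c * v k ≤ Φ k) :
    (∃ L, Tendsto Φ atTop (𝓝 L)) ∧ Tendsto v atTop (𝓝 0) := by
  have hanti : Antitone Φ := antitone_nat_of_succ_le fun k => by nlinarith [hstep k, hv k]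
  have hL := tendsto_atTop_ciInf hanti ⟨0, by rintro _ ⟨k, rfl⟩; exact hΦ k⟩
  refine ⟨⟨_, hL⟩, squeeze_zero hv (g := fun k => (Φ k - Φ (k + 1)) / c) (fun k => ?_) ?_⟩
  · exact (le_div_iff₀' hc).2 (by linarith [hstep k])
  · simpa using (hL.sub (hL.comp (tendsto_add_atTop_nat 1))).div_const c

theorem isBounded_range_of_tendsto_norm_sub_sq {x : ℕ → E} {z : E} {L : ℝ}
    (h : Tendsto (fun k => ‖x k - z‖ ^ 2) atTop (𝓝 L)) : Bornology.IsBounded (Set.range x) := by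
  obtain ⟨C, hC⟩ := h.bddAbove_range
  refine (Metric.isBounded_closedBall (x := z) (r := √C)).subset ?_
  rintro _ ⟨k, rfl⟩
  exact Real.le_sqrt_of_sq_le (by simpa [dist_eq_norm] using hC ⟨k, rfl⟩)

theorem LipschitzWith.norm_sub_apply_le {T : E → E} (hT : LipschitzWith 1 T) (a b : E) :
    ‖a - T a‖ ≤ ‖b - T b‖ + 2 * ‖a - b‖ := by
  have hTab : ‖T b - T a‖ ≤ ‖a - b‖ := by simpa [norm_sub_rev] using hT.norm_sub_le b a
  calc ‖a - T a‖ = ‖(a - b) + (b - T b) + (T b - T a)‖ := by abel_nf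
    _ ≤ ‖a - b‖ + ‖b - T b‖ + ‖T b - T a‖ := norm_add₃_le
    _ ≤ ‖b - T b‖ + 2 * ‖a - b‖ := by linarith

theorem tendsto_norm_sub_apply_of_almost_cyclic {ι : Type*} {T : ι → E → E}
    (hT : ∀ i, LipschitzWith 1 (T i)) {x : ℕ → E} {idx : ℕ → ι} {M : ℕ}
    (hM : ∀ k, ∀ j, ∃ l, k + 1 ≤ l ∧ l ≤ k + M ∧ idx l = j)
    (hx : Tendsto (fun n => dist (x n) (x (n + 1))) atTop (𝓝 0))
    (hidx : Tendsto (fun n => ‖x n - T (idx n) (x n)‖) atTop (𝓝 0)) (j : ι) :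
    Tendsto (fun n => ‖x n - T j (x n)‖) atTop (𝓝 0) := by
  choose l hkl hlM hlj using fun k => hM k j
  have hkl' (k : ℕ) : k ≤ l k := (Nat.le_succ k).trans (hkl k)
  have hl : Tendsto l atTop atTop := tendsto_atTop_mono hkl' tendsto_id
  have hdist := tendsto_dist_of_tendsto_dist_succ hx (a := fun k => k) tendsto_id hkl' hlM
  refine squeeze_zero (fun _ => norm_nonneg _) (fun k => ?_)
    (by simpa using (hidx.comp hl).add (hdist.const_mul 2))
  simpa [hlj k, dist_eq_norm] using (hT j).norm_sub_apply_le (x k) (x (l k))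

end Normed

section Hilbert

variable {H : Type*} [NormedAddCommGroup H] [InnerProductSpace ℝ H]

def WeakTendsto (x : ℕ → H) (p : H) : Prop :=
  ∀ w : H, Tendsto (fun k => ⟪x k, w⟫) atTop (𝓝 ⟪p, w⟫)

/-- Sequential Banach–Alaoglu in the separable Hilbert space spanned by the sequence; the limit
functional is represented by a vector via Riesz, and orthogonal projection onto the span carries
the convergence over to all test vectors `w`. -/
theorem exists_strictMono_weakTendsto [CompleteSpace H] {x : ℕ → H}
    (hx : Bornology.IsBounded (Set.range x)) :
    ∃ p : H, ∃ φ : ℕ → ℕ, StrictMono φ ∧ WeakTendsto (x ∘ φ) p := by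
  obtain ⟨R, hR⟩ := isBounded_iff_forall_norm_le.1 hx
  set V := (Submodule.span ℝ (Set.range x)).topologicalClosure
  have : TopologicalSpace.SeparableSpace V :=
    ((Set.countable_range x).isSeparable.span.closure.mono
      (Submodule.topologicalClosure_coe _).le).separableSpace
  have hxV (k : ℕ) : x k ∈ V :=
    Submodule.le_topologicalClosure _ (Submodule.subset_span ⟨k, rfl⟩)
  let f (k : ℕ) : WeakDual ℝ V :=
    StrongDual.toWeakDual (InnerProductSpace.toDual ℝ V ⟨x k, hxV k⟩)
  have hf (k : ℕ) : f k ∈ WeakDual.toStrongDual ⁻¹' Metric.closedBall 0 R := by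
    change dist (InnerProductSpace.toDual ℝ V ⟨x k, hxV k⟩) 0 ≤ R
    rw [dist_zero_right, LinearIsometryEquiv.norm_map]
    exact hR _ ⟨k, rfl⟩
  obtain ⟨g, -, φ, hφ, hlim⟩ := WeakDual.isSeqCompact_closedBall ℝ V 0 R hf
  refine ⟨(InnerProductSpace.toDual ℝ V).symm (WeakDual.toStrongDual g), φ, hφ, fun w => ?_⟩
  rw [← Submodule.inner_orthogonalProjectionOnto_eq_of_mem_left,
    InnerProductSpace.toDual_symm_apply]
  refine (((WeakDual.eval_continuous _).tendsto g).comp hlim).congr fun k => ?_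
  exact Submodule.inner_orthogonalProjectionOnto_eq_of_mem_left ⟨x (φ k), hxV _⟩ w

theorem WeakTendsto.tendsto_norm_sub_sq_sub_norm_sub_sq {y : ℕ → H} {p : H}
    (hp : WeakTendsto y p) (q : H) :
    Tendsto (fun k => ‖y k - q‖ ^ 2 - ‖y k - p‖ ^ 2) atTop (𝓝 (‖p - q‖ ^ 2)) := by
  have hexp (k : ℕ) : ‖y k - q‖ ^ 2 - ‖y k - p‖ ^ 2 =
      ‖p - q‖ ^ 2 + 2 * (⟪y k, p - q⟫ - ⟪p, p - q⟫) := by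
    rw [← sub_add_sub_cancel (y k) p q, norm_add_sq_real, inner_sub_left]
    ring
  simp_rw [hexp]
  simpa using ((hp (p - q)).sub_const ⟪p, p - q⟫).const_mul 2 |>.const_add (‖p - q‖ ^ 2)

theorem LipschitzWith.isFixedPt_of_weakTendsto {T : H → H} (hT : LipschitzWith 1 T)
    {y : ℕ → H} {p : H} (hy : Bornology.IsBounded (Set.range y))
    (hreg : Tendsto (fun k => ‖y k - T (y k)‖) atTop (𝓝 0)) (hp : WeakTendsto y p) :
    IsFixedPt T p := by
  obtain ⟨R, hR⟩ := isBounded_iff_forall_norm_le.1 hy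
  have hbound (k : ℕ) : ‖y k - T p‖ ^ 2 - ‖y k - p‖ ^ 2 ≤
      ‖y k - T (y k)‖ * (‖y k - T (y k)‖ + 2 * (R + ‖p‖)) := by
    have hTyp : ‖T (y k) - T p‖ ≤ ‖y k - p‖ := by simpa using hT.norm_sub_le (y k) p
    have h₁ : ‖y k - T p‖ ≤ ‖y k - T (y k)‖ + ‖y k - p‖ := by
      linarith [norm_sub_le_norm_sub_add_norm_sub (y k) (T (y k)) (T p)]
    have h₂ : ‖y k - p‖ ≤ R + ‖p‖ := (_root_.norm_sub_le _ _).trans (by linarith [hR _ ⟨k, rfl⟩])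
    nlinarith [norm_nonneg (y k - T p), norm_nonneg (y k - T (y k)), norm_nonneg (y k - p)]
  have hlim : Tendsto (fun k => ‖y k - T (y k)‖ * (‖y k - T (y k)‖ + 2 * (R + ‖p‖))) atTop
      (𝓝 0) := by
    simpa using hreg.mul (hreg.add_const _)
  have hsq : ‖p - T p‖ ^ 2 ≤ 0 :=
    le_of_tendsto_of_tendsto' (hp.tendsto_norm_sub_sq_sub_norm_sub_sq (T p)) hlim hbound
  exact (norm_sub_eq_zero_iff.1 <|
    (pow_eq_zero_iff two_ne_zero).1 (hsq.antisymm (sq_nonneg _))).symm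

theorem WeakTendsto.eq_of_tendsto_norm_sub_sq {x : ℕ → H} {φ ψ : ℕ → ℕ} {p q : H} {Lp Lq : ℝ}
    (hφ : Tendsto φ atTop atTop) (hψ : Tendsto ψ atTop atTop)
    (hp : WeakTendsto (x ∘ φ) p) (hq : WeakTendsto (x ∘ ψ) q)
    (hLp : Tendsto (fun k => ‖x k - p‖ ^ 2) atTop (𝓝 Lp))
    (hLq : Tendsto (fun k => ‖x k - q‖ ^ 2) atTop (𝓝 Lq)) : p = q := by
  have h₁ : ‖p - q‖ ^ 2 = Lq - Lp :=
    tendsto_nhds_unique (hp.tendsto_norm_sub_sq_sub_norm_sub_sq q) ((hLq.sub hLp).comp hφ)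
  have h₂ : ‖p - q‖ ^ 2 = Lp - Lq := by
    rw [norm_sub_rev]
    exact tendsto_nhds_unique (hq.tendsto_norm_sub_sq_sub_norm_sub_sq p) ((hLp.sub hLq).comp hψ)
  exact norm_sub_eq_zero_iff.1 ((pow_eq_zero_iff two_ne_zero).1 (by linarith))

theorem exists_mem_weakTendsto_of_tendsto_norm_sub_sq [CompleteSpace H] {x : ℕ → H}
    {F : Set H} (hF : F.Nonempty)
    (hconv : ∀ z ∈ F, ∃ L, Tendsto (fun k => ‖x k - z‖ ^ 2) atTop (𝓝 L))
    (hclust : ∀ p φ, Tendsto φ atTop atTop → WeakTendsto (x ∘ φ) p → p ∈ F) :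
    ∃ p ∈ F, WeakTendsto x p := by
  obtain ⟨z, hz⟩ := hF
  have hbdd := isBounded_range_of_tendsto_norm_sub_sq (hconv z hz).choose_spec
  obtain ⟨p, φ, hφ, hp⟩ := exists_strictMono_weakTendsto hbdd
  have hpF := hclust p φ hφ.tendsto_atTop hp
  obtain ⟨Lp, hLp⟩ := hconv p hpF
  refine ⟨p, hpF, fun w => tendsto_of_subseq_tendsto fun ns hns => ?_⟩
  obtain ⟨q, ψ, hψ, hq⟩ :=
    exists_strictMono_weakTendsto (hbdd.subset (Set.range_comp_subset_range ns x))
  have hnsψ := hns.comp hψ.tendsto_atTop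
  obtain ⟨Lq, hLq⟩ := hconv q (hclust q (ns ∘ ψ) hnsψ hq)
  obtain rfl := hp.eq_of_tendsto_norm_sub_sq hφ.tendsto_atTop hnsψ hq hLp hLq
  exact ⟨ψ, hq w⟩

theorem LipschitzWith.norm_sub_apply_sq_le_two_inner {T : H → H} (hT : LipschitzWith 1 T)
    {z : H} (hz : IsFixedPt T z) (b : H) : ‖b - T b‖ ^ 2 ≤ 2 * ⟪b - z, b - T b⟫ := by
  have hle : ‖(b - z) - (b - T b)‖ ≤ ‖b - z‖ := by
    simpa [hz.eq] using hT.norm_sub_le b z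
  have hexp := norm_sub_sq_real (b - z) (b - T b)
  nlinarith [norm_nonneg ((b - z) - (b - T b)), norm_nonneg (b - z)]

theorem norm_sub_smul_sub_apply_sub_sq_le {T : H → H} (hT : LipschitzWith 1 T) {z : H}
    (hz : IsFixedPt T z) (a b : H) {t : ℝ} (ht : 0 ≤ t) :
    ‖a - t • (b - T b) - z‖ ^ 2 ≤
      ‖a - z‖ ^ 2 - t * (1 - t) * ‖b - T b‖ ^ 2 + 2 * t * ‖b - T b‖ * ‖a - b‖ := by
  set s := b - T b
  have hfirm := hT.norm_sub_apply_sq_le_two_inner hz b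
  have hexp : ‖a - t • s - z‖ ^ 2 = ‖a - z‖ ^ 2 - 2 * t * ⟪a - z, s⟫ + t ^ 2 * ‖s‖ ^ 2 := by
    rw [sub_right_comm, norm_sub_sq_real, inner_smul_right, norm_smul, Real.norm_of_nonneg ht]
    ring
  have hsplit : ⟪a - z, s⟫ = ⟪b - z, s⟫ + ⟪a - b, s⟫ := by
    rw [← inner_add_left, sub_add_sub_cancel']
  have hcs : -(‖a - b‖ * ‖s‖) ≤ ⟪a - b, s⟫ := neg_le_of_abs_le (abs_real_inner_le_norm _ _)
  rw [hexp, hsplit]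
  nlinarith [mul_le_mul_of_nonneg_left hcs ht]

end Hilbert

section ASI

variable {E : Type*} [NormedAddCommGroup E] {ι : Type*} {T : ι → E → E} {x : ℕ → E}
  {lam : ℕ → ℝ} {idx : ℕ → ι} {d : ℕ → ℕ} {τ : ℕ} {ε : ℝ}

/-- Indexed so that `k` refers to step `k + τ + 1`. The weights `1, …, τ` make the penalty
`∑ᵢ ‖x (k+i+2) - x (k+i+1)‖²` paid by a delayed step telescope against the new step length
(`sum_range_succ_mul_add_shift`). -/
def asiEnergy (x : ℕ → E) (τ : ℕ) (z : E) (k : ℕ) : ℝ :=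
  ‖x (k + τ + 1) - z‖ ^ 2 +
    ∑ i ∈ range τ, (i + 1 : ℝ) * dist (x (k + 1 + i)) (x (k + 1 + i + 1)) ^ 2

theorem asiEnergy_succ_add_le [InnerProductSpace ℝ E] (hT : ∀ i, LipschitzWith 1 (T i)) {z : E}
    (hz : ∀ i, IsFixedPt (T i) z) (hd : ∀ n, d n ≤ τ)
    (hstep : ∀ n, τ < n → x (n + 1) = x n - lam n • (x (n - d n) - T (idx n) (x (n - d n))))
    (hlam : ∀ n, 0 ≤ lam n) (hlam_le : ∀ n, (2 * τ + 1 + ε) * lam n ≤ 1) (k : ℕ) :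
    asiEnergy x τ z (k + 1) + ε * dist (x (k + τ + 1)) (x (k + τ + 1 + 1)) ^ 2 ≤
      asiEnergy x τ z k := by
  set n := k + τ + 1
  set b := x (n - d n)
  set s := b - T (idx n) b
  set t := lam n
  have ht : 0 ≤ t := hlam n
  have hdn := hd n
  have hxn : x (n + 1) = x n - t • s := hstep n (by omega)
  have hun : dist (x n) (x (n + 1)) = t * ‖s‖ := by
    rw [hxn, dist_eq_norm, sub_sub_cancel, norm_smul, Real.norm_of_nonneg ht]
  have hlag : ‖x n - b‖ ≤ ∑ i ∈ range τ, dist (x (k + 1 + i)) (x (k + 1 + i + 1)) := by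
    rw [← dist_eq_norm, dist_comm]
    exact dist_le_sum_range_dist_succ x (by omega) (by omega) (by omega)
  have hone := norm_sub_smul_sub_apply_sub_sq_le (hT (idx n)) (hz (idx n)) (x n) b ht
  rw [← hxn] at hone
  have hcross := mul_le_mul_of_nonneg_left hlag (by positivity : 0 ≤ 2 * t * ‖s‖)
  have hyoung := two_mul_mul_sum_le (range τ) (t * ‖s‖)
    fun i => dist (x (k + 1 + i)) (x (k + 1 + i + 1))
  rw [card_range] at hyoung
  have hshift := sum_range_succ_mul_add_shift (fun j => dist (x j) (x (j + 1)) ^ 2) τ (k + 1)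
  beta_reduce at hshift
  rw [show k + 1 + τ = n by omega, hun] at hshift
  have hgain : 0 ≤ t * ‖s‖ ^ 2 * (1 - (2 * τ + 1 + ε) * t) :=
    mul_nonneg (by positivity) (by linarith [hlam_le n])
  simp only [asiEnergy]
  rw [show k + 1 + τ + 1 = n + 1 by omega, hun]
  linarith

theorem asi_tendsto_dist_succ_and_norm_sub_sq [InnerProductSpace ℝ E]
    (hT : ∀ i, LipschitzWith 1 (T i)) {z : E} (hz : ∀ i, IsFixedPt (T i) z) (hd : ∀ n, d n ≤ τ)
    (hstep : ∀ n, τ < n → x (n + 1) = x n - lam n • (x (n - d n) - T (idx n) (x (n - d n))))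
    (hlam : ∀ n, 0 ≤ lam n) (hlam_le : ∀ n, (2 * τ + 1 + ε) * lam n ≤ 1) (hε : 0 < ε) :
    Tendsto (fun n => dist (x n) (x (n + 1))) atTop (𝓝 0) ∧
      ∃ L, Tendsto (fun n => ‖x n - z‖ ^ 2) atTop (𝓝 L) := by
  obtain ⟨⟨L, hL⟩, hv⟩ := exists_tendsto_and_tendsto_zero_of_add_le (Φ := asiEnergy x τ z) hε
    (fun k => by unfold asiEnergy; positivity) (fun k => sq_nonneg _)
    (asiEnergy_succ_add_le hT hz hd hstep hlam hlam_le)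
  have hx : Tendsto (fun n => dist (x n) (x (n + 1))) atTop (𝓝 0) := by
    rw [← tendsto_add_atTop_iff_nat (τ + 1)]
    simpa [Real.sqrt_sq dist_nonneg, add_assoc] using hv.sqrt
  refine ⟨hx, L, ?_⟩
  have hW : Tendsto (fun k => ∑ i ∈ range τ,
      (i + 1 : ℝ) * dist (x (k + 1 + i)) (x (k + 1 + i + 1)) ^ 2) atTop (𝓝 0) := by
    simpa [add_assoc] using tendsto_finsetSum (range τ) fun i _ =>
      ((hx.comp ((tendsto_add_atTop_nat i).comp (tendsto_add_atTop_nat 1))).pow 2).const_mul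
        (i + 1 : ℝ)
  rw [← tendsto_add_atTop_iff_nat (τ + 1)]
  simpa [asiEnergy, add_assoc] using hL.sub hW

theorem asi_tendsto_norm_sub_apply_idx [NormedSpace ℝ E] (hT : ∀ i, LipschitzWith 1 (T i))
    (hd : ∀ n, d n ≤ τ)
    (hstep : ∀ n, τ < n → x (n + 1) = x n - lam n • (x (n - d n) - T (idx n) (x (n - d n))))
    (hlam : ∀ n, ε ≤ lam n) (hε : 0 < ε)
    (hx : Tendsto (fun n => dist (x n) (x (n + 1))) atTop (𝓝 0)) :
    Tendsto (fun n => ‖x n - T (idx n) (x n)‖) atTop (𝓝 0) := by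
  have hlag : Tendsto (fun n => dist (x (n - d n)) (x n)) atTop (𝓝 0) :=
    tendsto_dist_of_tendsto_dist_succ hx (a := fun n => n - d n) (b := fun n => n)
      (tendsto_atTop_mono (fun n => Nat.sub_le_sub_left (hd n) n) (tendsto_sub_atTop_nat τ))
      (fun n => Nat.sub_le n (d n)) (fun n => le_tsub_add.trans (Nat.add_le_add_left (hd n) _))
  refine squeeze_zero' (Eventually.of_forall fun _ => norm_nonneg _) ?_
    (by simpa using (hx.div_const ε).add (hlag.const_mul 2))
  filter_upwards [eventually_gt_atTop τ] with n hn
  set b := x (n - d n)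
  have hres : ‖b - T (idx n) b‖ ≤ dist (x n) (x (n + 1)) / ε := by
    rw [le_div_iff₀' hε, hstep n hn, dist_eq_norm, sub_sub_cancel, norm_smul,
      Real.norm_of_nonneg (hε.le.trans (hlam n))]
    exact mul_le_mul_of_nonneg_right (hlam n) (norm_nonneg _)
  calc ‖x n - T (idx n) (x n)‖ ≤ ‖b - T (idx n) b‖ + 2 * ‖x n - b‖ :=
        (hT (idx n)).norm_sub_apply_le _ _
    _ ≤ dist (x n) (x (n + 1)) / ε + 2 * dist b (x n) :=
        add_le_add hres (by rw [dist_comm, dist_eq_norm])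

end ASI

theorem asi_main_convergence_general
    {H : Type*} [NormedAddCommGroup H] [InnerProductSpace ℝ H] [CompleteSpace H]
    (m : ℕ) (T : Fin m → H → H)
    (hT : ∀ i, ∀ u v : H, ‖T i u - T i v‖ ≤ ‖u - v‖)
    (hcommon : ∃ z : H, ∀ i, T i z = z)
    (x : ℕ → H) (lam : ℕ → ℝ) (idx : ℕ → Fin m) (d : ℕ → ℕ) (τ : ℕ)
    (hcyc : ∃ M : ℕ, m ≤ M ∧ ∀ k, ∀ j : Fin m,
      ∃ l, k + 1 ≤ l ∧ l ≤ k + M ∧ idx l = j)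
    (hd : ∀ k, d k ≤ min τ (k - 1))
    (hup : ∀ k, 1 ≤ k → x (k + 1) =
      if k ≤ τ then x k
      else x k - lam k • (x (k - d k) - T (idx k) (x (k - d k))))
    (ε : ℝ) (hε : 0 < ε)
    (hlam2 : ∀ k, ε ≤ lam k ∧ lam k ≤ 1 / (2 * (τ : ℝ) + 1 + ε)) :
    ∃ xstar ∈ ⋂ i, Function.fixedPoints (T i),
      ∀ w : H, Tendsto (fun k => (inner ℝ (x k) w : ℝ)) atTop (nhds (inner ℝ xstar w)) := by
  have hT' (i : Fin m) : LipschitzWith 1 (T i) :=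
    LipschitzWith.of_dist_le_mul fun u v => by simpa [dist_eq_norm] using hT i u v
  have hdτ (n : ℕ) : d n ≤ τ := (hd n).trans (min_le_left _ _)
  have hstep (n : ℕ) (hn : τ < n) :
      x (n + 1) = x n - lam n • (x (n - d n) - T (idx n) (x (n - d n))) := by
    rw [hup n (by omega), if_neg (by omega)]
  have hlam (n : ℕ) : 0 ≤ lam n := hε.le.trans (hlam2 n).1
  have hlam_le (n : ℕ) : (2 * τ + 1 + ε) * lam n ≤ 1 :=
    (le_div_iff₀' (by positivity)).1 (hlam2 n).2
  have hfejer {z : H} (hz : ∀ i, IsFixedPt (T i) z) :=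
    asi_tendsto_dist_succ_and_norm_sub_sq hT' hz hdτ hstep hlam hlam_le hε
  obtain ⟨z₀, hz₀⟩ := hcommon
  obtain ⟨M, -, hM⟩ := hcyc
  obtain ⟨hx, L₀, hL₀⟩ := hfejer hz₀
  have hbdd := isBounded_range_of_tendsto_norm_sub_sq hL₀
  have hreg := tendsto_norm_sub_apply_of_almost_cyclic hT' hM hx
    (asi_tendsto_norm_sub_apply_idx hT' hdτ hstep (fun n => (hlam2 n).1) hε hx)
  exact exists_mem_weakTendsto_of_tendsto_norm_sub_sq ⟨z₀, Set.mem_iInter.2 hz₀⟩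
    (fun z hz => (hfejer fun i => Set.mem_iInter.1 hz i).2)
    fun p φ hφ hp => Set.mem_iInter.2 fun i => (hT' i).isFixedPt_of_weakTendsto
      (hbdd.subset (Set.range_comp_subset_range φ x)) ((hreg i).comp hφ) hp

/-- Theorem 1 of the paper, the main convergence result. Let `x` be a
sequence generated by the ASI algorithm with delay bound `τ ≥ 0`, where the control
sequence `idx` is an almost cyclic control on `{1, ..., m}`. If there is `ε > 0` such that
`ε ≤ λ k ≤ 1/(2τ + 1 + ε)` for all `k`, then `x` converges weakly to a common fixed point
`x* ∈ C = ⋂ i, Fix (T i)`. -/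
theorem asi_main_convergence
    {H : Type*} [NormedAddCommGroup H] [InnerProductSpace ℝ H] [CompleteSpace H]
    (m : ℕ) (hm : 1 ≤ m) (T : Fin m → H → H)
    (hT : ∀ i, ∀ u v : H, ‖T i u - T i v‖ ≤ ‖u - v‖)
    (hcommon : ∃ z : H, ∀ i, T i z = z)
    (x : ℕ → H) (lam : ℕ → ℝ) (idx : ℕ → Fin m) (d : ℕ → ℕ) (τ : ℕ)
    (hlam : ∀ k, 0 < lam k ∧ lam k < 1)
    (hcyc : ∃ M : ℕ, m ≤ M ∧ ∀ k, ∀ j : Fin m,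
      ∃ l, k + 1 ≤ l ∧ l ≤ k + M ∧ idx l = j)
    (hd : ∀ k, d k ≤ min τ (k - 1))
    (hx0 : x 0 = x 1)
    (hup : ∀ k, 1 ≤ k → x (k + 1) =
      if k ≤ τ then x k
      else x k - lam k • (x (k - d k) - T (idx k) (x (k - d k))))
    (ε : ℝ) (hε : 0 < ε)
    (hlam2 : ∀ k, ε ≤ lam k ∧ lam k ≤ 1 / (2 * (τ : ℝ) + 1 + ε)) :
    ∃ xstar ∈ ⋂ i, Function.fixedPoints (T i),
      ∀ w : H, Tendsto (fun k => (inner ℝ (x k) w : ℝ)) atTop (nhds (inner ℝ xstar w)) :=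
  asi_main_convergence_general m T hT hcommon x lam idx d τ hcyc hd hup ε hε hlam2
end

section
/- Let A be an M×N real matrix with every row and every column nonzero, with rows a¹, ..., a^M. Let W be the M×M diagonal matrix with i-th diagonal entry 1/‖aⁱ‖², and let D be the N×N diagonal matrix with j-th diagonal entry 1/s_j, where s_j is the number of nonzero entries in the j-th column of A. Then the spectral radius of D·Aᵀ·W·A is at most 1. -/
/-!
If `D Aᵀ W A v = μ v`, pairing with `S v`, where `S = D⁻¹ = diag(s)`, gives
`μ · ∑ⱼ sⱼ |vⱼ|² = ∑ᵢ |(A v)ᵢ|² / ‖aⁱ‖²`. Cauchy–Schwarz restricted to the support of row `i` bounds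
the `i`-th term by `∑_{j : A i j ≠ 0} |vⱼ|²`, and summing over `i` counts each `|vⱼ|²` exactly `sⱼ`
times, so `|μ| ≤ 1`.
-/

open Matrix Finset

variable {m n : Type*} [Fintype m] [Fintype n]

theorem norm_sum_mul_sq_div_le (a : n → ℝ) (x : n → ℂ) :
    ‖∑ j, a j * x j‖ ^ 2 / ∑ j, a j ^ 2 ≤ ∑ j with a j ≠ 0, ‖x j‖ ^ 2 := by
  have hsupp (f : n → ℝ) (hf : ∀ j, a j = 0 → f j = 0) : ∑ j with a j ≠ 0, f j = ∑ j, f j :=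
    sum_filter_of_ne fun j _ => mt (hf j)
  refine div_le_of_le_mul₀ (by positivity) (by positivity) ?_
  calc ‖∑ j, a j * x j‖ ^ 2 ≤ (∑ j, |a j| * ‖x j‖) ^ 2 := by
        gcongr
        exact (norm_sum_le _ _).trans_eq (by simp)
    _ = (∑ j with a j ≠ 0, |a j| * ‖x j‖) ^ 2 := by
        rw [hsupp _ fun j hj => by simp [hj]]
    _ ≤ (∑ j with a j ≠ 0, |a j| ^ 2) * ∑ j with a j ≠ 0, ‖x j‖ ^ 2 :=
        sum_mul_sq_le_sq_mul_sq _ _ _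
    _ = (∑ j with a j ≠ 0, ‖x j‖ ^ 2) * ∑ j, a j ^ 2 := by
        simp_rw [sq_abs]
        rw [hsupp _ fun j hj => by simp [hj], mul_comm]

theorem sum_sum_filter_ne_zero_eq (A : Matrix m n ℝ) (f : n → ℝ) :
    ∑ i, ∑ j with A i j ≠ 0, f j = ∑ j, #{i | A i j ≠ 0} * f j := by
  simp_rw [sum_filter]
  rw [sum_comm]
  refine sum_congr rfl fun j _ => ?_
  rw [← sum_filter, sum_const, nsmul_eq_mul]

theorem dotProduct_map_transpose_mul_diagonal_mul_mulVec [DecidableEq m] (A : Matrix m n ℝ)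
    (c : m → ℝ) (v : n → ℂ) :
    star v ⬝ᵥ (Aᵀ * diagonal c * A).map ((↑) : ℝ → ℂ) *ᵥ v
      = ↑(∑ i, c i * ‖(A.map ((↑) : ℝ → ℂ) *ᵥ v) i‖ ^ 2) := by
  have hmap : (Aᵀ * diagonal c * A).map ((↑) : ℝ → ℂ)
      = (A.map ((↑) : ℝ → ℂ))ᴴ * diagonal (fun i => (c i : ℂ)) * A.map ((↑) : ℝ → ℂ) := by
    rw [← conjTranspose_map _ (fun x => (Complex.conj_ofReal x).symm),
      conjTranspose_eq_transpose_of_trivial, ← diagonal_map (f := ((↑) : ℝ → ℂ)) Complex.ofReal_zero]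
    change (Aᵀ * diagonal c * A).map Complex.ofRealHom = _
    rw [Matrix.map_mul, Matrix.map_mul]
    rfl
  rw [hmap, ← mulVec_mulVec, ← mulVec_mulVec, dotProduct_mulVec, ← star_mulVec]
  push_cast
  simp only [dotProduct, mulVec_diagonal, Pi.star_apply, RCLike.star_def]
  refine sum_congr rfl fun i _ => ?_
  rw [← Complex.conj_mul']
  ring

theorem norm_le_one_of_weighted_rayleigh_le [DecidableEq n] {C : Matrix n n ℂ} {v : n → ℂ}
    {μ : ℂ} (w : n → ℝ) (hw : ∀ j, 0 < w j) (hv : v ≠ 0)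
    (hCv : (diagonal (fun j => ((1 / w j : ℝ) : ℂ)) * C) *ᵥ v = μ • v)
    (hq : ‖star v ⬝ᵥ C *ᵥ v‖ ≤ ∑ j, w j * ‖v j‖ ^ 2) :
    ‖μ‖ ≤ 1 := by
  have hCv_apply (j : n) : (C *ᵥ v) j = w j * (μ * v j) := by
    have hj := congrFun hCv j
    rw [← mulVec_mulVec, mulVec_diagonal, Pi.smul_apply, smul_eq_mul] at hj
    have : (w j : ℂ) ≠ 0 := Complex.ofReal_ne_zero.mpr (hw j).ne'
    rw [← hj]
    push_cast
    field_simp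
  have hq_eq : star v ⬝ᵥ C *ᵥ v = μ * ↑(∑ j, w j * ‖v j‖ ^ 2) := by
    push_cast
    simp only [dotProduct, hCv_apply, Pi.star_apply, RCLike.star_def, mul_sum]
    refine sum_congr rfl fun j _ => ?_
    rw [← Complex.conj_mul']
    ring
  have hpos : 0 < ∑ j, w j * ‖v j‖ ^ 2 := by
    obtain ⟨j, hj⟩ := Function.ne_iff.mp hv
    exact sum_pos' (fun j _ => by have := hw j; positivity)
      ⟨j, mem_univ j, mul_pos (hw j) (pow_pos (norm_pos_iff.mpr hj) 2)⟩
  rw [hq_eq, norm_mul, Complex.norm_real, Real.norm_of_nonneg hpos.le] at hq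
  exact (mul_le_iff_le_one_left hpos).mp hq

theorem drop_spectral_radius_le_one_general
    (M N : ℕ) (A : Matrix (Fin M) (Fin N) ℝ)
    (hcols : ∀ j, ∃ i, A i j ≠ 0) :
    ∀ (μ : ℂ) (v : Fin N → ℂ), v ≠ 0 →
      ((Matrix.diagonal (fun j : Fin N => 1 / (Set.ncard {i : Fin M | A i j ≠ 0} : ℝ)) *
          A.transpose *
          Matrix.diagonal (fun i : Fin M => 1 / ∑ j, (A i j) ^ 2) *
          A).map (fun t : ℝ => (t : ℂ))).mulVec v = μ • v →
      ‖μ‖ ≤ 1 := by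
  intro μ v hv hAv
  set s : Fin N → ℝ := fun j => (#{i | A i j ≠ 0} : ℕ)
  have hs : ∀ j, 0 < s j := fun j => by
    obtain ⟨i, hi⟩ := hcols j
    exact Nat.cast_pos.mpr (card_pos.mpr ⟨i, by simpa using hi⟩)
  simp_rw [← coe_filter_univ, Set.ncard_coe_finset] at hAv
  rw [Matrix.mul_assoc, Matrix.mul_assoc, ← Matrix.mul_assoc Aᵀ] at hAv
  set c : Fin M → ℝ := fun i => 1 / ∑ j, A i j ^ 2
  have hmap : ((diagonal fun j => 1 / s j) * (Aᵀ * diagonal c * A)).map ((↑) : ℝ → ℂ)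
      = diagonal (fun j => ((1 / s j : ℝ) : ℂ)) * (Aᵀ * diagonal c * A).map (↑) := by
    ext j k
    simp [diagonal_mul]
  rw [hmap] at hAv
  refine norm_le_one_of_weighted_rayleigh_le s hs hv hAv ?_
  rw [dotProduct_map_transpose_mul_diagonal_mul_mulVec, Complex.norm_real,
    Real.norm_of_nonneg (by positivity)]
  calc ∑ i, c i * ‖(A.map ((↑) : ℝ → ℂ) *ᵥ v) i‖ ^ 2
      ≤ ∑ i, ∑ j with A i j ≠ 0, ‖v j‖ ^ 2 := by
        refine sum_le_sum fun i _ => ?_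
        rw [one_div_mul_eq_div]
        exact norm_sum_mul_sq_div_le (A i) v
    _ = ∑ j, s j * ‖v j‖ ^ 2 := sum_sum_filter_ne_zero_eq A _

/-- Lemma 2.2 of the DROP paper, as used in the text. Let `A` be an
`M × N` real matrix with every row and every column nonzero, `W` the diagonal matrix with
`i`-th diagonal entry `1/‖aⁱ‖²` (inverse squared Euclidean norm of the `i`-th row), and
`D` the diagonal matrix with `j`-th entry `1/s j`, where `s j` is the number of nonzero
entries in the `j`-th column of `A`. Then the spectral radius of `D·Aᵀ·W·A` is at most
`1`: every complex eigenvalue `μ` of it satisfies `|μ| ≤ 1`. -/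
theorem drop_spectral_radius_le_one
    (M N : ℕ) (A : Matrix (Fin M) (Fin N) ℝ)
    (hrows : ∀ i, (fun j => A i j) ≠ 0)
    (hcols : ∀ j, ∃ i, A i j ≠ 0) :
    ∀ (μ : ℂ) (v : Fin N → ℂ), v ≠ 0 →
      ((Matrix.diagonal (fun j : Fin N => 1 / (Set.ncard {i : Fin M | A i j ≠ 0} : ℝ)) *
          A.transpose *
          Matrix.diagonal (fun i : Fin M => 1 / ∑ j, (A i j) ^ 2) *
          A).map (fun t : ℝ => (t : ℂ))).mulVec v = μ • v →
      ‖μ‖ ≤ 1 :=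
  drop_spectral_radius_le_one_general M N A hcols
end

section
/- Let A_t be an m_t×N real matrix with every row and every column nonzero, with rows aⁱ for i in the block, and let b_t ∈ ℝ^{m_t}. Let W_t be the m_t×m_t diagonal matrix with i-th diagonal entry 1/‖aⁱ‖², let D_t be the N×N diagonal matrix with j-th diagonal entry 1/s_j where s_j is the number of nonzero entries in the j-th column of A_t, and set Ā_t := A_t·D_t^{1/2}. Then the DROP operator U_t : ℝ^N → ℝ^N defined by U_t(y) := y − Ā_tᵀ·W_t·(Ā_t·y − b_t) is nonexpansive with respect to the Euclidean norm. -/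
/-!
Write `B := W^{1/2} Ā`, so that `U y₁ - U y₂ = (I - BᵀB)(y₁ - y₂)`. For any contraction `B`
between inner product spaces, `‖x - B†Bx‖² = ‖x‖² - 2‖Bx‖² + ‖B†Bx‖² ≤ ‖x‖² - ‖Bx‖²`, since
`B†` is a contraction as well. That `B` is a contraction is Cauchy–Schwarz on each row of `A`
restricted to its support: row `i` contributes at most `∑_{j : aᵢⱼ ≠ 0} vⱼ² / sⱼ` to `‖Bv‖²`,
and column `j` lies in the support of exactly `sⱼ` rows.
-/

open Finset Matrix

namespace LinearMap

variable {𝕜 E F : Type*} [RCLike 𝕜]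
  [NormedAddCommGroup E] [InnerProductSpace 𝕜 E] [FiniteDimensional 𝕜 E]
  [NormedAddCommGroup F] [InnerProductSpace 𝕜 F] [FiniteDimensional 𝕜 F]
  {B : E →ₗ[𝕜] F}

theorem norm_adjoint_apply_le (hB : ∀ v, ‖B v‖ ≤ ‖v‖) (y : F) : ‖B.adjoint y‖ ≤ ‖y‖ := by
  have key : ‖B.adjoint y‖ ^ 2 ≤ ‖y‖ * ‖B.adjoint y‖ :=
    calc ‖B.adjoint y‖ ^ 2 = RCLike.re (inner 𝕜 y (B (B.adjoint y))) := by
          rw [← adjoint_inner_left, inner_self_eq_norm_sq]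
      _ ≤ ‖y‖ * ‖B (B.adjoint y)‖ := (RCLike.re_le_norm _).trans (norm_inner_le_norm _ _)
      _ ≤ ‖y‖ * ‖B.adjoint y‖ := by gcongr; exact hB _
  nlinarith [norm_nonneg (B.adjoint y), norm_nonneg y]

theorem norm_sub_adjoint_apply_apply_le (hB : ∀ v, ‖B v‖ ≤ ‖v‖) (x : E) :
    ‖x - B.adjoint (B x)‖ ≤ ‖x‖ := by
  have hsq : ‖x - B.adjoint (B x)‖ ^ 2 = ‖x‖ ^ 2 - 2 * ‖B x‖ ^ 2 + ‖B.adjoint (B x)‖ ^ 2 := by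
    rw [@norm_sub_sq 𝕜, adjoint_inner_right, inner_self_eq_norm_sq]
  have hadj : ‖B.adjoint (B x)‖ ≤ ‖B x‖ := norm_adjoint_apply_le hB _
  refine le_of_sq_le_sq ?_ (norm_nonneg x)
  nlinarith [norm_nonneg (B.adjoint (B x))]

end LinearMap

theorem Finset.sq_sum_mul_div_sum_sq_le {ι : Type*} (s : Finset ι) (a u : ι → ℝ) :
    (∑ i ∈ s, a i * u i) ^ 2 / ∑ i ∈ s, a i ^ 2 ≤ ∑ i ∈ s with a i ≠ 0, u i ^ 2 := by
  have hmul : ∑ i ∈ s with a i ≠ 0, a i * u i = ∑ i ∈ s, a i * u i :=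
    sum_filter_of_ne fun i _ h => left_ne_zero_of_mul h
  have hsq : ∑ i ∈ s with a i ≠ 0, a i ^ 2 = ∑ i ∈ s, a i ^ 2 :=
    sum_filter_of_ne fun i _ h => by simpa using h
  rw [← hmul, ← hsq]
  refine div_le_of_le_mul₀ (sum_nonneg fun i _ => sq_nonneg _)
    (sum_nonneg fun i _ => sq_nonneg _) ?_
  rw [mul_comm]
  exact sum_mul_sq_le_sq_mul_sq _ _ _

namespace Matrix

variable {m n : Type*} [Fintype m] [Fintype n]

theorem sum_sq_sub_transpose_mulVec_mulVec_le (B : Matrix m n ℝ)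
    (hB : ∀ v, ∑ i, (B *ᵥ v) i ^ 2 ≤ ∑ j, v j ^ 2) (x : n → ℝ) :
    ∑ j, (x - Bᵀ *ᵥ (B *ᵥ x)) j ^ 2 ≤ ∑ j, x j ^ 2 := by
  classical
  have hnorm {ι : Type _} [Fintype ι] (v : ι → ℝ) : ‖WithLp.toLp 2 v‖ ^ 2 = ∑ i, v i ^ 2 :=
    EuclideanSpace.real_norm_sq_eq _
  have hadj : (toEuclideanLin B).adjoint = toEuclideanLin Bᵀ := by
    rw [← toEuclideanLin_conjTranspose_eq_adjoint, conjTranspose_eq_transpose_of_trivial]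
  have hcontr : ∀ v, ‖toEuclideanLin B v‖ ≤ ‖v‖ := fun v => by
    refine le_of_sq_le_sq ?_ (norm_nonneg v)
    simpa [toLpLin_apply, hnorm, EuclideanSpace.real_norm_sq_eq] using hB v.ofLp
  have h := LinearMap.norm_sub_adjoint_apply_apply_le hcontr (WithLp.toLp 2 x)
  rw [hadj] at h
  have h2 := pow_le_pow_left₀ (norm_nonneg _) h 2
  rwa [toLpLin_apply, toLpLin_apply, ← WithLp.toLp_sub, hnorm, hnorm] at h2

theorem sum_sq_sub_transpose_mul_diagonal_mul_mulVec_le [DecidableEq m] (A : Matrix m n ℝ)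
    {w : m → ℝ} (hw : ∀ i, 0 ≤ w i) (hA : ∀ v, ∑ i, w i * (A *ᵥ v) i ^ 2 ≤ ∑ j, v j ^ 2)
    (x : n → ℝ) : ∑ j, (x - (Aᵀ * diagonal w * A) *ᵥ x) j ^ 2 ≤ ∑ j, x j ^ 2 := by
  set B := diagonal (fun i => √(w i)) * A
  have hBB : Aᵀ * diagonal w * A = Bᵀ * B := by
    simp only [B, transpose_mul, diagonal_transpose, Matrix.mul_assoc,
      ← Matrix.mul_assoc (diagonal _), diagonal_mul_diagonal]
    congr 3
    ext i
    exact (Real.mul_self_sqrt (hw i)).symm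
  have hB : ∀ v, ∑ i, (B *ᵥ v) i ^ 2 ≤ ∑ j, v j ^ 2 := fun v => by
    simpa [B, ← mulVec_mulVec, mulVec_diagonal, mul_pow, Real.sq_sqrt (hw _)] using hA v
  rw [hBB, ← mulVec_mulVec]
  exact sum_sq_sub_transpose_mulVec_mulVec_le B hB x

theorem sum_sq_mulVec_div_le (A : Matrix m n ℝ) (u : n → ℝ) :
    ∑ i, (A *ᵥ u) i ^ 2 / ∑ j, A i j ^ 2 ≤ ∑ j, #{i | A i j ≠ 0} * u j ^ 2 :=
  calc ∑ i, (A *ᵥ u) i ^ 2 / ∑ j, A i j ^ 2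
      ≤ ∑ i, ∑ j with A i j ≠ 0, u j ^ 2 := sum_le_sum fun i _ => sq_sum_mul_div_sum_sq_le _ _ _
    _ = ∑ j, #{i | A i j ≠ 0} * u j ^ 2 := by
      rw [sum_comm' (t' := univ) (s' := fun j => {i | A i j ≠ 0}) (by simp)]
      simp only [sum_const, nsmul_eq_mul]

theorem sum_one_div_sum_sq_mul_sq_mulVec_diagonal_le [DecidableEq n] (A : Matrix m n ℝ)
    (v : n → ℝ) :
    ∑ i, (1 / ∑ j, A i j ^ 2) *
        ((A * diagonal fun j => √(1 / #{i | A i j ≠ 0})) *ᵥ v) i ^ 2 ≤ ∑ j, v j ^ 2 := by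
  have hD : ∀ d : n → ℝ, diagonal d *ᵥ v = fun j => d j * v j :=
    fun d => funext (mulVec_diagonal d v)
  simp only [← mulVec_mulVec, hD, one_div_mul_eq_div]
  refine (A.sum_sq_mulVec_div_le _).trans (sum_le_sum fun j _ => ?_)
  have hcol : (#{i | A i j ≠ 0} : ℝ) * √(1 / #{i | A i j ≠ 0}) ^ 2 ≤ 1 := by
    rw [Real.sq_sqrt (by positivity), mul_one_div]
    exact div_self_le_one _
  rw [mul_pow, ← mul_assoc]
  exact mul_le_of_le_one_left (sq_nonneg _) hcol

end Matrix

theorem drop_operator_nonexpansive_general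
    (mt N : ℕ) (A : Matrix (Fin mt) (Fin N) ℝ) (b : Fin mt → ℝ)
    (W : Matrix (Fin mt) (Fin mt) ℝ)
    (hW : W = Matrix.diagonal (fun i => 1 / ∑ j, (A i j) ^ 2))
    (Dhalf : Matrix (Fin N) (Fin N) ℝ)
    (hDhalf : Dhalf = Matrix.diagonal
      (fun j => Real.sqrt (1 / (Set.ncard {i : Fin mt | A i j ≠ 0} : ℝ))))
    (Abar : Matrix (Fin mt) (Fin N) ℝ) (hAbar : Abar = A * Dhalf)
    (U : (Fin N → ℝ) → (Fin N → ℝ))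
    (hU : ∀ y, U y = y - Abar.transpose.mulVec (W.mulVec (Abar.mulVec y - b))) :
    ∀ y1 y2 : Fin N → ℝ,
      Real.sqrt (∑ j, (U y1 j - U y2 j) ^ 2) ≤
        Real.sqrt (∑ j, (y1 j - y2 j) ^ 2) := by
  intro y1 y2
  have hcard : ∀ j, Set.ncard {i | A i j ≠ 0} = #{i | A i j ≠ 0} := fun j => by
    rw [Set.ncard_eq_toFinset_card', Set.toFinset_ofPred]
  have hdiff : U y1 - U y2 = (y1 - y2) - (Abarᵀ * W * Abar) *ᵥ (y1 - y2) := by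
    simp only [hU, ← mulVec_mulVec, mulVec_sub]
    abel
  refine Real.sqrt_le_sqrt ?_
  change ∑ j, (U y1 - U y2) j ^ 2 ≤ ∑ j, (y1 - y2) j ^ 2
  rw [hdiff, hW, hAbar, hDhalf]
  simp only [hcard]
  exact sum_sq_sub_transpose_mul_diagonal_mul_mulVec_le _ (fun i => by positivity)
    (sum_one_div_sum_sq_mul_sq_mulVec_diagonal_le A) _

/-- Proposition 2 of the paper. Let `A` be an `m_t × N` real matrix
with every row and every column nonzero and `b ∈ ℝ^{m_t}`. With `W` the diagonal matrix
of inverse squared row norms, `D` the diagonal matrix with `j`-th entry `1/s j` (`s j` the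
number of nonzero entries in column `j`), `D^{1/2}` its positive diagonal square root, and
`Ā := A·D^{1/2}`, the DROP operator `U y := y - Āᵀ·W·(Ā·y - b)` is nonexpansive with
respect to the Euclidean norm. -/
theorem drop_operator_nonexpansive
    (mt N : ℕ) (A : Matrix (Fin mt) (Fin N) ℝ) (b : Fin mt → ℝ)
    (hrows : ∀ i, (fun j => A i j) ≠ 0)
    (hcols : ∀ j, ∃ i, A i j ≠ 0)
    (W : Matrix (Fin mt) (Fin mt) ℝ)
    (hW : W = Matrix.diagonal (fun i => 1 / ∑ j, (A i j) ^ 2))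
    (Dhalf : Matrix (Fin N) (Fin N) ℝ)
    (hDhalf : Dhalf = Matrix.diagonal
      (fun j => Real.sqrt (1 / (Set.ncard {i : Fin mt | A i j ≠ 0} : ℝ))))
    (Abar : Matrix (Fin mt) (Fin N) ℝ) (hAbar : Abar = A * Dhalf)
    (U : (Fin N → ℝ) → (Fin N → ℝ))
    (hU : ∀ y, U y = y - Abar.transpose.mulVec (W.mulVec (Abar.mulVec y - b))) :
    ∀ y1 y2 : Fin N → ℝ,
      Real.sqrt (∑ j, (U y1 j - U y2 j) ^ 2) ≤
        Real.sqrt (∑ j, (y1 j - y2 j) ^ 2) :=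
  drop_operator_nonexpansive_general mt N A b W hW Dhalf hDhalf Abar hAbar U hU
end
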